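/- arXiv:1112.1764 — 7 statements merged into one kernel-verified Lean document; each statement's English description precedes it below -/
import Mathlib

section
/- If G is a finitely generated group not containing a free subsemigroup of rank 2, and H is a normal subgroup of G with G/H solvable, then H is finitely generated. -/
/-!
Milnor's argument. Let `M ⊴ K` with `K/M` generated by the image of `t`. If that image has
finite order, `M` has finite index and Schreier's lemma applies. Otherwise take `a ∈ M`: since
`K` has no free subsemigroup, two distinct positive words in `t * a` and `t` are equal in `K`;
they have the same length because `t` has infinite order modulo `M`, and cancelling their common
prefix shows that some `t⁻ᵐ a tᵐ` lies in the subgroup generated by the `t⁻ⁱ a tⁱ` with `i < m`.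
Conjugating by powers of `t⁻¹` then puts every `t⁻ⁿ a tⁿ`, `n ≥ 0`, into that subgroup, and with
the same argument for `t⁻¹` the subgroup generated by all conjugates `tⁿ a t⁻ⁿ` is finitely
generated. Finitely many such subgroups, for the `M`-parts of generators of `K`, generate `M`.

If `T/N` is abelian and `T` is finitely generated, adjoining the generators of `T` to `N` one at
a time gives a chain of cyclic extensions, so `N` is finitely generated; for `G/H` solvable,
apply this along the preimages in `G` of the derived series of `G/H`.
-/

open Subgroup

def NoFreeSubsemigroup (K : Type*) [Mul K] : Prop :=
  ∀ φ : FreeSemigroup Bool →ₙ* K, ¬ Function.Injective φ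

namespace NoFreeSubsemigroup

theorem of_injective {K L : Type*} [Mul K] [Mul L] (h : NoFreeSubsemigroup L) (f : K →ₙ* L)
    (hf : Function.Injective f) : NoFreeSubsemigroup K :=
  fun φ hφ => h (f.comp φ) (hf.comp hφ)

theorem exists_prod_map_eq {K : Type*} [Monoid K] (h : NoFreeSubsemigroup K) (f : Bool → K) :
    ∃ u v : List Bool, u ≠ v ∧ (u.map f).prod = (v.map f).prod := by
  have hlift : FreeSemigroup.lift f =
      (FreeMonoid.lift f).toMulHom.comp FreeSemigroup.toFreeMonoid :=
    FreeSemigroup.hom_ext rfl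
  obtain ⟨w₁, w₂, heq, hne⟩ := Function.not_injective_iff.mp (h (FreeSemigroup.lift f))
  refine ⟨FreeMonoid.toList w₁.toFreeMonoid, FreeMonoid.toList w₂.toFreeMonoid,
    fun h => hne (FreeSemigroup.toFreeMonoid_injective (FreeMonoid.toList.injective h)), ?_⟩
  simpa [hlift, FreeMonoid.lift_apply] using heq

end NoFreeSubsemigroup

section Extraction

variable {K : Type*} [Group K]

theorem exists_mem_closure_prod_map_eq_pow_mul (t a : K) (l : List Bool) :
    ∃ f ∈ closure ((fun i => (MulAut.conj t⁻¹ ^ i) a) '' Set.Iio l.length),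
      (l.map fun b => if b then t * a else t).prod = t ^ l.length * f := by
  induction l with
  | nil => exact ⟨1, one_mem _, by simp⟩
  | cons b l ih =>
    obtain ⟨f, hf, hprod⟩ := ih
    have hmono : closure ((fun i => (MulAut.conj t⁻¹ ^ i) a) '' Set.Iio l.length) ≤
        closure ((fun i => (MulAut.conj t⁻¹ ^ i) a) '' Set.Iio (b :: l).length) :=
      closure_mono (Set.image_mono (Set.Iio_subset_Iio (Nat.le_succ _)))
    have hlast : (MulAut.conj t⁻¹ ^ l.length) a ∈
        closure ((fun i => (MulAut.conj t⁻¹ ^ i) a) '' Set.Iio (b :: l).length) :=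
      subset_closure ⟨l.length, by simp, rfl⟩
    cases b
    · exact ⟨f, hmono hf, by simp [hprod, pow_succ', mul_assoc]⟩
    · refine ⟨(MulAut.conj t⁻¹ ^ l.length) a * f, mul_mem hlast (hmono hf), ?_⟩
      simp only [List.map_cons, List.prod_cons, if_true, hprod, ← map_pow, MulAut.conj_apply,
        List.length_cons]
      group

theorem conj_pow_mem_closure_of_mul_prod_map_eq (t a : K) {p q : List Bool}
    (hpq : p.length = q.length)
    (h : t * a * (p.map fun b => if b then t * a else t).prod =
      t * (q.map fun b => if b then t * a else t).prod) :
    (MulAut.conj t⁻¹ ^ p.length) a ∈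
      closure ((fun i => (MulAut.conj t⁻¹ ^ i) a) '' Set.Iio p.length) := by
  obtain ⟨f, hf, hp⟩ := exists_mem_closure_prod_map_eq_pow_mul t a p
  obtain ⟨g, hg, hq⟩ := exists_mem_closure_prod_map_eq_pow_mul t a q
  rw [hp, hq, ← hpq] at h
  have : (MulAut.conj t⁻¹ ^ p.length) a = g * f⁻¹ := by
    rw [← map_pow, MulAut.conj_apply]
    calc _ = (t ^ p.length)⁻¹ * t⁻¹ * (t * a * (t ^ p.length * f)) * f⁻¹ := by group
      _ = g * f⁻¹ := by rw [h]; group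
  rw [this]
  exact mul_mem (hpq ▸ hg) (inv_mem hf)

theorem exists_conj_mem_closure_of_prod_map_eq (t a : K) :
    ∀ u v : List Bool, u.length = v.length → u ≠ v →
      (u.map fun b => if b then t * a else t).prod =
        (v.map fun b => if b then t * a else t).prod →
      ∃ m, (MulAut.conj t⁻¹ ^ m) a ∈
        closure ((fun i => (MulAut.conj t⁻¹ ^ i) a) '' Set.Iio m)
  | [], [], _, hne, _ => (hne rfl).elim
  | b :: u, c :: v, hlen, hne, heq => by
    simp only [List.length_cons, Nat.add_right_cancel_iff] at hlen
    simp only [List.map_cons, List.prod_cons] at heq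
    by_cases hbc : b = c
    · subst hbc
      exact exists_conj_mem_closure_of_prod_map_eq t a u v hlen (fun h => hne (h ▸ rfl))
        (mul_left_cancel heq)
    cases b <;> cases c
    · exact (hbc rfl).elim
    · exact ⟨_, conj_pow_mem_closure_of_mul_prod_map_eq t a hlen.symm
        (by simpa using heq.symm)⟩
    · exact ⟨_, conj_pow_mem_closure_of_mul_prod_map_eq t a hlen (by simpa using heq)⟩
    · exact (hbc rfl).elim

end Extraction

section Orbit

variable {K : Type*} [Group K]

theorem pow_apply_mem_closure_of_pow_apply_mem (σ : MulAut K) (a : K) {m : ℕ}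
    (hm : (σ ^ m) a ∈ closure ((fun i => (σ ^ i) a) '' Set.Iio m)) (n : ℕ) :
    (σ ^ n) a ∈ closure ((fun i => (σ ^ i) a) '' Set.Iio m) := by
  induction n using Nat.strong_induction_on with
  | _ n ih =>
    rcases lt_or_ge n m with hnm | hmn
    · exact subset_closure ⟨n, hnm, rfl⟩
    obtain ⟨k, rfl⟩ := Nat.exists_eq_add_of_le' hmn
    have hshift := mem_map_of_mem (σ ^ k).toMonoidHom hm
    rw [MonoidHom.map_closure] at hshift
    refine (closure_le _).mpr ?_ (by simpa [pow_add, MulAut.mul_apply] using hshift)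
    rintro _ ⟨_, ⟨i, hi, rfl⟩, rfl⟩
    simpa [← MulAut.mul_apply, ← pow_add] using ih (k + i) (by simp at hi; omega)

theorem fg_closure_range_pow_apply (σ : MulAut K) (a : K) {m : ℕ}
    (hm : (σ ^ m) a ∈ closure ((fun i => (σ ^ i) a) '' Set.Iio m)) :
    (closure (Set.range fun i : ℕ => (σ ^ i) a)).FG := by
  have : closure (Set.range fun i : ℕ => (σ ^ i) a) =
      closure ((fun i => (σ ^ i) a) '' Set.Iio m) :=
    le_antisymm ((closure_le _).mpr (Set.range_subset_iff.mpr
      (pow_apply_mem_closure_of_pow_apply_mem σ a hm)))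
      (closure_mono (Set.image_subset_range _ _))
  rw [this]
  exact (Subgroup.fg_iff _).mpr ⟨_, rfl, (Set.finite_Iio m).image _⟩

theorem fg_closure_range_zpow_apply (σ : MulAut K) (a : K) {m m' : ℕ}
    (hm : (σ ^ m) a ∈ closure ((fun i => (σ ^ i) a) '' Set.Iio m))
    (hm' : (σ⁻¹ ^ m') a ∈ closure ((fun i => (σ⁻¹ ^ i) a) '' Set.Iio m')) :
    (closure (Set.range fun n : ℤ => (σ ^ n) a)).FG := by
  have : Set.range (fun n : ℤ => (σ ^ n) a) =
      Set.range (fun i : ℕ => (σ ^ i) a) ∪ Set.range (fun i : ℕ => (σ⁻¹ ^ i) a) := by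
    ext x
    constructor
    · rintro ⟨n, rfl⟩
      rcases Int.eq_nat_or_neg n with ⟨i, rfl | rfl⟩
      · exact Or.inl ⟨i, by simp⟩
      · exact Or.inr ⟨i, by simp⟩
    · rintro (⟨i, rfl⟩ | ⟨i, rfl⟩)
      · exact ⟨i, by simp⟩
      · exact ⟨-i, by simp⟩
  rw [this, Subgroup.closure_union]
  exact (fg_closure_range_pow_apply σ a hm).sup (fg_closure_range_pow_apply σ⁻¹ a hm')

theorem map_closure_range_zpow_apply (σ : MulAut K) (a : K) :
    (closure (Set.range fun n : ℤ => (σ ^ n) a)).map (σ : K →* K) =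
      closure (Set.range fun n : ℤ => (σ ^ n) a) := by
  rw [MonoidHom.map_closure, ← Set.range_comp,
    ← (Equiv.addRight (1 : ℤ)).surjective.range_comp (fun n : ℤ => (σ ^ n) a)]
  congr 2
  ext n
  simp [add_comm n, zpow_add, MulAut.mul_apply]

end Orbit

section Milnor

variable {K : Type*} [Group K]

theorem NoFreeSubsemigroup.exists_conj_mem_closure (hK : NoFreeSubsemigroup K)
    {M : Subgroup K} [M.Normal] {t a : K} (ht : ∀ n : ℤ, t ^ n ∈ M → n = 0) (ha : a ∈ M) :
    ∃ m, (MulAut.conj t⁻¹ ^ m) a ∈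
      closure ((fun i => (MulAut.conj t⁻¹ ^ i) a) '' Set.Iio m) := by
  obtain ⟨u, v, hne, heq⟩ := hK.exists_prod_map_eq fun b => if b then t * a else t
  refine exists_conj_mem_closure_of_prod_map_eq t a u v ?_ hne heq
  have hconj : ∀ l : ℕ, closure ((fun i => (MulAut.conj t⁻¹ ^ i) a) '' Set.Iio l) ≤ M := by
    intro l
    rw [closure_le]
    rintro _ ⟨i, -, rfl⟩
    simpa [← map_pow] using Normal.conj_mem ‹_› a ha (t⁻¹ ^ i)
  obtain ⟨f, hf, hu⟩ := exists_mem_closure_prod_map_eq_pow_mul t a u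
  obtain ⟨g, hg, hv⟩ := exists_mem_closure_prod_map_eq_pow_mul t a v
  have : t ^ (-(v.length : ℤ) + u.length) = g * f⁻¹ := by
    rw [zpow_add, zpow_neg, zpow_natCast, zpow_natCast]
    rw [hu, hv] at heq
    calc _ = (t ^ v.length)⁻¹ * (t ^ u.length * f) * f⁻¹ := by group
      _ = g * f⁻¹ := by rw [heq]; group
  have := ht _ (this ▸ mul_mem (hconj _ hg) (inv_mem (hconj _ hf)))
  omega

theorem NoFreeSubsemigroup.fg_closure_range_conj_zpow (hK : NoFreeSubsemigroup K)
    {M : Subgroup K} [M.Normal] {t a : K} (ht : ∀ n : ℤ, t ^ n ∈ M → n = 0) (ha : a ∈ M) :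
    (closure (Set.range fun n : ℤ => (MulAut.conj t ^ n) a)).FG := by
  have ht' : ∀ n : ℤ, t⁻¹ ^ n ∈ M → n = 0 := fun n hn =>
    neg_eq_zero.mp (ht (-n) (by rwa [zpow_neg, ← inv_zpow]))
  obtain ⟨m, hm⟩ := hK.exists_conj_mem_closure ht' ha
  obtain ⟨m', hm'⟩ := hK.exists_conj_mem_closure ht ha
  rw [inv_inv] at hm
  rw [map_inv] at hm'
  exact fg_closure_range_zpow_apply _ a hm hm'

theorem NoFreeSubsemigroup.fg_of_sup_zpowers_eq_top_of_not_isOfFinOrder [Group.FG K]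
    (hK : NoFreeSubsemigroup K) {M : Subgroup K} [M.Normal] {t : K} (htop : M ⊔ zpowers t = ⊤)
    (hfin : ¬IsOfFinOrder (t : K ⧸ M)) : M.FG := by
  have ht : ∀ n : ℤ, t ^ n ∈ M → n = 0 := fun n hn =>
    injective_zpow_iff_not_isOfFinOrder.mpr hfin (a₂ := 0) <| by
      simpa [← QuotientGroup.mk_zpow, QuotientGroup.eq_one_iff] using hn
  obtain ⟨S, hS⟩ := Group.FG.out (G := K)
  have hdecomp : ∀ s : K, ∃ w ∈ M, ∃ n : ℤ, w * t ^ n = s := by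
    intro s
    have hs : s ∈ ((M ⊔ zpowers t : Subgroup K) : Set K) := by simp [htop]
    rw [normal_mul] at hs
    obtain ⟨w, hw, _, ⟨n, rfl⟩, rfl⟩ := hs
    exact ⟨w, hw, n, rfl⟩
  choose w hwM n hwn using hdecomp
  set N := ⨆ s ∈ S, closure (Set.range fun n : ℤ => (MulAut.conj t ^ n) (w s))
  have hNfg : N.FG := FG.biSup_finset S _ fun s _ => hK.fg_closure_range_conj_zpow ht (hwM s)
  have hNM : N ≤ M := iSup₂_le fun s _ => (closure_le _).mpr <| Set.range_subset_iff.mpr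
    fun n => by simpa [← map_zpow] using Normal.conj_mem ‹_› _ (hwM s) (t ^ n)
  have htN : t ∈ normalizer (N : Set K) := by
    rw [mem_normalizer_iff_map_conj_eq]
    simp only [N, Subgroup.map_iSup, map_closure_range_zpow_apply]
  have hNtop : N ⊔ zpowers t = ⊤ := by
    rw [eq_top_iff, ← hS, closure_le]
    intro s hs
    rw [← hwn s]
    have hws : w s ∈ N :=
      mem_iSup_of_mem s <| mem_iSup_of_mem hs <| subset_closure ⟨0, by simp⟩
    exact mul_mem (mem_sup_left hws) (mem_sup_right (zpow_mem_zpowers t _))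
  have hMN : M ≤ N := by
    intro x hx
    have hx' : x ∈ ((N ⊔ zpowers t : Subgroup K) : Set K) := by simp [hNtop]
    rw [coe_mul_of_right_le_normalizer_left N _ (zpowers_le.mpr htN)] at hx'
    obtain ⟨y, hy, _, ⟨k, rfl⟩, rfl⟩ := hx'
    have hk : t ^ k ∈ M := by simpa using mul_mem (inv_mem (hNM hy)) hx
    simpa [ht k hk] using hy
  exact le_antisymm hNM hMN ▸ hNfg

theorem finiteIndex_of_sup_zpowers_eq_top {M : Subgroup K} [M.Normal] {t : K}
    (htop : M ⊔ zpowers t = ⊤) (ht : IsOfFinOrder (t : K ⧸ M)) : M.FiniteIndex := by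
  have hzp : zpowers (t : K ⧸ M) = ⊤ := by
    have := congrArg (map (QuotientGroup.mk' M)) htop
    rwa [Subgroup.map_sup, QuotientGroup.map_mk'_self, bot_sup_eq, MonoidHom.map_zpowers,
      map_top_of_surjective _ (QuotientGroup.mk'_surjective M)] at this
  have : Finite (K ⧸ M) := by
    rw [← Set.finite_univ_iff, ← coe_top, ← hzp]
    exact finite_zpowers.mpr ht
  exact finiteIndex_of_finite_quotient

theorem NoFreeSubsemigroup.fg_of_sup_zpowers_eq_top [Group.FG K] (hK : NoFreeSubsemigroup K)
    {M : Subgroup K} [M.Normal] {t : K} (htop : M ⊔ zpowers t = ⊤) : M.FG := by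
  by_cases ht : IsOfFinOrder (t : K ⧸ M)
  · have := finiteIndex_of_sup_zpowers_eq_top htop ht
    exact (Group.fg_iff_subgroup_fg M).mp inferInstance
  · exact hK.fg_of_sup_zpowers_eq_top_of_not_isOfFinOrder htop ht

theorem NoFreeSubsemigroup.fg_of_fg_zpowers_sup (hK : NoFreeSubsemigroup K) {N : Subgroup K}
    {t : K} (hfg : (zpowers t ⊔ N).FG) (ht : t ∈ normalizer (N : Set K)) : N.FG := by
  set T := zpowers t ⊔ N
  have hNT : N ≤ T := le_sup_right
  have : Group.FG T := (Group.fg_iff_subgroup_fg T).mpr hfg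
  have := normal_subgroupOf_sup_of_le_normalizer (zpowers_le.mpr ht)
  have htop : N.subgroupOf T ⊔ zpowers ⟨t, mem_sup_left (mem_zpowers t)⟩ = ⊤ := by
    refine map_injective T.subtype_injective ?_
    rw [Subgroup.map_sup, map_subgroupOf_eq_of_le hNT, MonoidHom.map_zpowers,
      ← MonoidHom.range_eq_map, range_subtype, sup_comm]
    rfl
  have := (hK.of_injective T.subtype.toMulHom T.subtype_injective).fg_of_sup_zpowers_eq_top htop
  have := (Group.fg_iff_subgroup_fg _).mpr this
  exact (Group.fg_iff_subgroup_fg N).mp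
    (Group.fg_of_surjective (f := (subgroupOfEquivOfLe hNT).toMonoidHom) (MulEquiv.surjective _))

theorem NoFreeSubsemigroup.fg_of_commutator_le (hK : NoFreeSubsemigroup K) {N T : Subgroup K}
    (hT : T.FG) (hNT : N ≤ T) (hcomm : ⁅T, T⁆ ≤ N) : N.FG := by
  classical
  obtain ⟨S, rfl⟩ := hT
  suffices ∀ S' : Finset K, (S' : Set K) ⊆ closure (S : Set K) →
      (N ⊔ closure ↑S').FG → N.FG from
    this S subset_closure (by rw [sup_eq_right.mpr hNT]; exact ⟨S, rfl⟩)
  intro S'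
  induction S' using Finset.induction_on with
  | empty => simp
  | insert g S' _ ih =>
    intro hsub hfg
    rw [Finset.coe_insert, Set.insert_subset_iff] at hsub
    have hsup : zpowers g ⊔ (N ⊔ closure ↑S') = N ⊔ closure ↑(insert g S') := by
      rw [Finset.coe_insert, Set.insert_eq, Subgroup.closure_union, ← zpowers_eq_closure,
        sup_left_comm]
    have hnorm : closure (S : Set K) ≤ normalizer ((N ⊔ closure ↑S' : Subgroup K) : Set K) :=
      le_normalizer_iff_commutator_le_right.mpr <| (commutator_mono le_rfl
        (sup_le hNT ((closure_le _).mpr hsub.2))).trans (hcomm.trans le_sup_left)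
    rw [← hsup] at hfg
    exact ih hsub.2 (hK.fg_of_fg_zpowers_sup hfg (hnorm hsub.1))

theorem NoFreeSubsemigroup.fg_of_isSolvable_quotient [Group.FG K] (hK : NoFreeSubsemigroup K)
    (H : Subgroup K) [H.Normal] [Group.IsSolvable (K ⧸ H)] : H.FG := by
  obtain ⟨n, hn⟩ := Group.IsSolvable.solvable (G := K ⧸ H)
  set C : ℕ → Subgroup K := fun i => (derivedSeries (K ⧸ H) i).comap (QuotientGroup.mk' H)
  have hcomm : ∀ i, ⁅C i, C i⁆ ≤ C (i + 1) := fun i => by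
    rw [← map_le_iff_le_comap, map_commutator, map_comap_eq_self_of_surjective
      (QuotientGroup.mk'_surjective H), derivedSeries_succ]
  have hfg : ∀ i, (C i).FG := fun i => by
    induction i with
    | zero => simpa [C] using Group.FG.out
    | succ i ih =>
      exact hK.fg_of_commutator_le ih (comap_mono (derivedSeries_antitone _ i.le_succ)) (hcomm i)
  simpa [C, hn] using hfg n

end Milnor

/-- If `G` is a finitely generated group containing no free subsemigroup of rank 2 and
`H ⊴ G` with `G/H` solvable, then `H` is finitely generated. -/
theorem fg_of_no_free_subsemigroup_of_solvable_quotient {G : Type*} [Group G]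
    (hfg : Group.FG G)
    (hnofree : ∀ φ : FreeSemigroup Bool →ₙ* G, ¬ Function.Injective φ)
    (H : Subgroup G) [H.Normal] (hsolv : IsSolvable (G ⧸ H)) :
    H.FG :=
  have : Group.IsSolvable (G ⧸ H) := hsolv
  NoFreeSubsemigroup.fg_of_isSolvable_quotient hnofree H
end

section
/- If a group G has no free subsemigroup of rank 2, then for all a, b ∈ G the subgroup generated by {b^{-n} a b^n : n ∈ ℤ} is finitely generated. -/
/-!
Write `cₙ = b⁻ⁿ a bⁿ` and `H = ⟨cₙ | n ∈ ℤ⟩`. A positive word of length `m` in `x = a b⁻¹`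
and `y = b⁻¹` evaluates to `c_{i₁} ⋯ c_{iₖ} b⁻ᵐ`, where `i₁ < ⋯ < iₖ` are the positions of its
letters `x`. Since `x` and `y` do not generate a free semigroup, two distinct words have the same
value.

If their lengths differ, some `bˢ` with `s ≠ 0` lies in `H`; as conjugation by `b` shifts the
indices, `H` is then generated by `bˢ` and `c₀, …, c_{|s|-1}`. If both have length `m`, cancelling
up to the first letter where they differ expresses some `cᵢ` through `c_{i+1}, …, c_{i+m}`, and
cancelling from the last one expresses some `cⱼ` through `c_{j-m}, …, c_{j-1}`. Shifting by powers
of `b`, this holds for all `i` and `j`, so any `m + 1` consecutive `cᵢ` generate `H`.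
-/

open Subgroup Set

section MaskedProd

variable {M : Type*} [Monoid M] (c : ℤ → M)

def maskedProd : List Bool → ℤ → M
  | [], _ => 1
  | d :: l, k => (if d then c k else 1) * maskedProd l (k + 1)

theorem maskedProd_append (l₁ l₂ : List Bool) (k : ℤ) :
    maskedProd c (l₁ ++ l₂) k = maskedProd c l₁ k * maskedProd c l₂ (k + l₁.length) := by
  induction l₁ generalizing k with
  | nil => simp [maskedProd]
  | cons d l ih =>
    simp only [List.cons_append, maskedProd, ih, mul_assoc, List.length_cons]
    congr 3
    push_cast
    ring

end MaskedProd

section MaskedProdGroup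

variable {G : Type*} [Group G] (c : ℤ → G)

theorem maskedProd_mem_closure (l : List Bool) (k : ℤ) :
    maskedProd c l k ∈ closure (c '' Ico k (k + l.length)) := by
  induction l generalizing k with
  | nil => exact one_mem _
  | cons d l ih =>
    refine mul_mem ?_ (closure_mono (image_mono ?_) (ih (k + 1)))
    · split_ifs
      · exact subset_closure ⟨k, ⟨le_rfl, by simp⟩, rfl⟩
      · exact one_mem _
    · intro i ⟨hi₁, hi₂⟩
      simp only [List.length_cons, Nat.cast_add, Nat.cast_one] at hi₂ ⊢
      constructor <;> omega

theorem exists_mem_closure_Ioc_of_maskedProd_eq {l₁ l₂ : List Bool} {k : ℤ}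
    (hlen : l₁.length = l₂.length) (hne : l₁ ≠ l₂) (h : maskedProd c l₁ k = maskedProd c l₂ k) :
    ∃ i, c i ∈ closure (c '' Ioc i (i + l₁.length)) := by
  induction l₁ generalizing l₂ k with
  | nil => exact absurd (List.eq_nil_of_length_eq_zero hlen.symm).symm hne
  | cons d t ih =>
    obtain ⟨d', t', rfl⟩ := List.exists_cons_of_length_eq_add_one hlen.symm
    simp only [List.length_cons, add_left_inj] at hlen
    simp only [maskedProd] at h
    by_cases hd : d = d'
    · subst hd
      obtain ⟨i, hi⟩ := ih hlen (fun ht => hne (ht ▸ rfl)) (mul_left_cancel h)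
      refine ⟨i, closure_mono (image_mono (Ioc_subset_Ioc_right ?_)) hi⟩
      simp
    · have hmem : ∀ l : List Bool, l.length = t.length →
          maskedProd c l (k + 1) ∈ closure (c '' Ioc k (k + (t.length + 1 : ℕ))) := by
        intro l hl
        refine closure_mono (image_mono fun i hi => ?_) (maskedProd_mem_closure c l _)
        simp only [mem_Ico, mem_Ioc] at hi ⊢
        push_cast at hi ⊢
        omega
      refine ⟨k, ?_⟩
      cases d <;> cases d' <;> simp only [not_true_eq_false, if_true, if_false,
        one_mul, Bool.false_eq_true] at hd h ⊢
      · exact (mul_mem_cancel_right (hmem t' hlen.symm)).mp (by rw [← h]; exact hmem t rfl)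
      · exact (mul_mem_cancel_right (hmem t rfl)).mp (by rw [h]; exact hmem t' hlen.symm)

theorem exists_mem_closure_Ico_of_maskedProd_eq {l₁ l₂ : List Bool} {k : ℤ}
    (hlen : l₁.length = l₂.length) (hne : l₁ ≠ l₂) (h : maskedProd c l₁ k = maskedProd c l₂ k) :
    ∃ i, c i ∈ closure (c '' Ico (i - l₁.length) i) := by
  induction l₁ using List.reverseRecOn generalizing l₂ with
  | nil => exact absurd (List.eq_nil_of_length_eq_zero hlen.symm).symm hne
  | append_singleton t d ih =>
    obtain ⟨t', d', rfl⟩ := (List.eq_nil_or_concat' l₂).resolve_left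
      (by rintro rfl; simp at hlen)
    simp only [List.length_append, List.length_singleton, add_left_inj] at hlen
    simp only [maskedProd_append, maskedProd, mul_one, hlen] at h
    by_cases hd : d = d'
    · subst hd
      obtain ⟨i, hi⟩ := ih hlen (fun ht => hne (ht ▸ rfl)) (mul_right_cancel h)
      refine ⟨i, closure_mono (image_mono (Ico_subset_Ico_left ?_)) hi⟩
      simp only [List.length_append, List.length_singleton]
      push_cast
      omega
    · have hmem : ∀ l : List Bool, l.length = t'.length →
          maskedProd c l k ∈ closure (c '' Ico (k + t'.length - (t.length + 1 : ℕ))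
            (k + t'.length)) := by
        intro l hl
        refine closure_mono (image_mono fun i hi => ?_) (maskedProd_mem_closure c l _)
        simp only [mem_Ico] at hi ⊢
        push_cast at hi ⊢
        omega
      refine ⟨k + t'.length, ?_⟩
      simp only [List.length_append, List.length_singleton]
      cases d <;> cases d' <;> simp only [not_true_eq_false, if_true, if_false,
        mul_one, Bool.false_eq_true] at hd h ⊢
      · exact (mul_mem_cancel_left (hmem t' rfl)).mp (by rw [← h]; exact hmem t hlen)
      · exact (mul_mem_cancel_left (hmem t hlen)).mp (by rw [h]; exact hmem t' rfl)

theorem closure_range_eq_closure_image_Icc {n : ℕ} (hup : ∀ k, c k ∈ closure (c '' Ico (k - n) k))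
    (hdown : ∀ k, c k ∈ closure (c '' Ioc k (k + n))) :
    closure (range c) = closure (c '' Icc 0 n) := by
  have hstep : ∀ j : ℤ, closure (c '' Icc (j + 1) (j + 1 + n)) = closure (c '' Icc j (j + n)) := by
    intro j
    apply le_antisymm <;> rw [closure_le] <;> rintro _ ⟨i, ⟨hi₁, hi₂⟩, rfl⟩
    · rcases hi₂.lt_or_eq with hi₂ | rfl
      · exact subset_closure ⟨i, ⟨by omega, by omega⟩, rfl⟩
      · refine closure_mono (image_mono fun x hx => ?_) (hup _)
        simp only [mem_Ico, mem_Icc] at hx ⊢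
        omega
    · rcases hi₁.lt_or_eq with hi₁ | rfl
      · exact subset_closure ⟨i, ⟨by omega, by omega⟩, rfl⟩
      · refine closure_mono (image_mono fun x hx => ?_) (hdown _)
        simp only [mem_Ioc, mem_Icc] at hx ⊢
        omega
  have hconst : ∀ j : ℤ, closure (c '' Icc j (j + n)) = closure (c '' Icc 0 n) := by
    intro j
    induction j using Int.induction_on with
    | zero => simp
    | succ i ih => rw [hstep, ih]
    | pred i ih => rw [← ih, ← hstep, sub_add_cancel]
  refine le_antisymm ((closure_le _).mpr ?_) (closure_mono (image_subset_range _ _))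
  rintro _ ⟨k, rfl⟩
  rw [← hconst k]
  exact subset_closure ⟨k, ⟨le_rfl, by omega⟩, rfl⟩

theorem zpow_sub_mem_closure_range_of_maskedProd_mul_zpow_eq {b : G} {l₁ l₂ : List Bool}
    {s₁ s₂ : ℤ} (h : maskedProd c l₁ 0 * b ^ s₁ = maskedProd c l₂ 0 * b ^ s₂) :
    b ^ (s₁ - s₂) ∈ closure (range c) := by
  have hb : b ^ (s₁ - s₂) = (maskedProd c l₁ 0)⁻¹ * maskedProd c l₂ 0 := by
    rw [zpow_sub, eq_inv_mul_iff_mul_eq, ← mul_assoc, h, mul_inv_cancel_right]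
  have hmem (l : List Bool) : maskedProd c l 0 ∈ closure (range c) :=
    closure_mono (image_subset_range _ _) (maskedProd_mem_closure c l 0)
  rw [hb]
  exact mul_mem (inv_mem (hmem l₁)) (hmem l₂)

end MaskedProdGroup

theorem FreeSemigroup.lift_eq_prod_map {α M : Type*} [Monoid M] (f : α → M)
    (w : FreeSemigroup α) : FreeSemigroup.lift f w = ((w.head :: w.tail).map f).prod := by
  rw [FreeSemigroup.lift_mk_eq_foldl]
  simp [List.prod_eq_foldl, List.foldl_map]

section ConjSeq

variable {G : Type*} [Group G] (a b : G)

def conjSeq (n : ℤ) : G := b ^ (-n) * a * b ^ n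

theorem conj_zpow_neg_conjSeq (t n : ℤ) :
    MulAut.conj (b ^ (-t)) (conjSeq a b n) = conjSeq a b (n + t) := by
  simp only [MulAut.conj_apply, conjSeq, neg_add, zpow_add]
  group

theorem conjSeq_add_mem_closure_image {i : ℤ} {s : Set ℤ}
    (h : conjSeq a b i ∈ closure (conjSeq a b '' s)) (t : ℤ) :
    conjSeq a b (i + t) ∈ closure (conjSeq a b '' ((· + t) '' s)) := by
  have := mem_map_of_mem (MulAut.conj (b ^ (-t))).toMonoidHom h
  rw [MonoidHom.map_closure, image_image] at this
  simpa only [MulEquiv.coe_toMonoidHom, conj_zpow_neg_conjSeq, image_image] using this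

theorem zpow_neg_mul_prod_map_mul_zpow (l : List Bool) (k : ℤ) :
    b ^ (-k) * (l.map fun d => if d then a * b⁻¹ else b⁻¹).prod * b ^ k =
      maskedProd (conjSeq a b) l k * b ^ (-(l.length : ℤ)) := by
  induction l generalizing k with
  | nil => simp [maskedProd]
  | cons d l ih =>
    rw [maskedProd, eq_mul_inv_of_mul_eq (ih (k + 1)).symm]
    cases d <;> simp only [List.map_cons, List.prod_cons, List.length_cons, Nat.cast_succ, conjSeq,
      Bool.false_eq_true, if_true, if_false] <;> group

theorem closure_range_conjSeq_eq_of_maskedProd_eq {l₁ l₂ : List Bool}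
    (hlen : l₁.length = l₂.length) (hne : l₁ ≠ l₂)
    (h : maskedProd (conjSeq a b) l₁ 0 = maskedProd (conjSeq a b) l₂ 0) :
    closure (range (conjSeq a b)) = closure (conjSeq a b '' Icc 0 l₁.length) := by
  obtain ⟨i, hi⟩ := exists_mem_closure_Ioc_of_maskedProd_eq _ hlen hne h
  obtain ⟨j, hj⟩ := exists_mem_closure_Ico_of_maskedProd_eq _ hlen hne h
  refine closure_range_eq_closure_image_Icc _ (fun k => ?_) (fun k => ?_)
  · simpa [image_add_const_Ico] using conjSeq_add_mem_closure_image a b hj (k - j)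
  · simpa [image_add_const_Ioc, add_comm] using conjSeq_add_mem_closure_image a b hi (k - i)

theorem closure_range_conjSeq_fg_of_zpow_mem {s : ℤ} (hs : s ≠ 0)
    (h : b ^ s ∈ closure (range (conjSeq a b))) : (closure (range (conjSeq a b))).FG := by
  obtain ⟨r, hr, hbr⟩ : ∃ r : ℤ, 0 < r ∧ b ^ r ∈ closure (range (conjSeq a b)) := by
    rcases hs.lt_or_gt with hs | hs
    · exact ⟨-s, neg_pos.mpr hs, by rw [zpow_neg]; exact inv_mem h⟩
    · exact ⟨s, hs, h⟩
  set K := closure (conjSeq a b '' Ico 0 r ∪ {b ^ r})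
  have hK : closure (range (conjSeq a b)) = K := by
    apply le_antisymm
    · rw [closure_le]
      rintro _ ⟨n, rfl⟩
      have hbrK : b ^ r ∈ K := subset_closure (Or.inr rfl)
      -- `conjSeq a b n` is a conjugate of `conjSeq a b (n % r)` by a power of `b ^ r`
      rw [← Int.emod_add_mul_ediv n r, ← conj_zpow_neg_conjSeq, MulAut.conj_apply,
        ← mul_neg, zpow_mul]
      have hmod : conjSeq a b (n % r) ∈ K :=
        subset_closure (Or.inl ⟨_, ⟨Int.emod_nonneg _ hr.ne', Int.emod_lt_of_pos _ hr⟩, rfl⟩)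
      exact mul_mem (mul_mem (zpow_mem hbrK _) hmod) (inv_mem (zpow_mem hbrK _))
    · rw [closure_le, union_subset_iff, singleton_subset_iff]
      exact ⟨(image_subset_range _ _).trans subset_closure, hbr⟩
  rw [hK]
  exact (fg_iff _).mpr ⟨_, rfl, ((finite_Ico 0 r).image _).union (finite_singleton _)⟩

theorem exists_ne_maskedProd_conjSeq_mul_zpow_eq
    (hnofree : ∀ φ : FreeSemigroup Bool →ₙ* G, ¬ Function.Injective φ) :
    ∃ l₁ l₂ : List Bool, l₁ ≠ l₂ ∧ maskedProd (conjSeq a b) l₁ 0 * b ^ (-(l₁.length : ℤ)) =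
      maskedProd (conjSeq a b) l₂ 0 * b ^ (-(l₂.length : ℤ)) := by
  obtain ⟨u, v, huv, hne⟩ := Function.not_injective_iff.mp
    (hnofree (FreeSemigroup.lift fun d => if d then a * b⁻¹ else b⁻¹))
  refine ⟨u.head :: u.tail, v.head :: v.tail,
    fun h => hne (FreeSemigroup.ext (List.cons.inj h).1 (List.cons.inj h).2), ?_⟩
  have hprod (l : List Bool) := zpow_neg_mul_prod_map_mul_zpow a b l 0
  simp only [neg_zero, zpow_zero, one_mul, mul_one] at hprod
  rwa [FreeSemigroup.lift_eq_prod_map, FreeSemigroup.lift_eq_prod_map, hprod, hprod] at huv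

end ConjSeq

/-- If `G` has no free subsemigroup of rank 2, then for all `a b : G` the subgroup
generated by `{b⁻ⁿ a bⁿ : n ∈ ℤ}` is finitely generated. -/
theorem conjugates_fg_of_no_free_subsemigroup {G : Type*} [Group G]
    (hnofree : ∀ φ : FreeSemigroup Bool →ₙ* G, ¬ Function.Injective φ)
    (a b : G) :
    (Subgroup.closure {x : G | ∃ n : ℤ, x = b ^ (-n) * a * b ^ n}).FG := by
  have hset : {x : G | ∃ n : ℤ, x = b ^ (-n) * a * b ^ n} = range (conjSeq a b) := by
    ext x
    exact exists_congr fun n => eq_comm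
  rw [hset]
  obtain ⟨l₁, l₂, hne, h⟩ := exists_ne_maskedProd_conjSeq_mul_zpow_eq a b hnofree
  rcases eq_or_ne l₁.length l₂.length with hlen | hlen
  · rw [hlen] at h
    rw [closure_range_conjSeq_eq_of_maskedProd_eq a b hlen hne (mul_right_cancel h)]
    exact (fg_iff _).mpr ⟨_, rfl, (finite_Icc _ _).image _⟩
  · exact closure_range_conjSeq_fg_of_zpow_mem a b (by omega)
      (zpow_sub_mem_closure_range_of_maskedProd_mul_zpow_eq _ h)
end

section
/- Let G be a finitely generated group and H a normal subgroup with G/H solvable. If for all a, b ∈ G the subgroup ⟨b^{-n} a b^n : n ∈ ℤ⟩ is finitely generated, then H is finitely generated. -/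
/-!
Milnor's trick: suppose `t` normalizes `N` and `N ⊔ ⟨t⟩` is generated by finitely many elements
`aᵢ tⁿⁱ` with `aᵢ ∈ N`. Then `N` is generated by the `t`-conjugates of the `aᵢ`, finitely many
finitely generated subgroups by hypothesis, together with the cyclic group `N ∩ ⟨t⟩`.
If `K/N` is abelian, adjoining the generators of `K` to `N` one at a time gives a chain
from `N` to `K` in which every step is normal with cyclic quotient; so `N` is finitely
generated whenever `K` is. For `G/H` solvable, descend along the preimages of the derived
series of `G/H`.
-/

open scoped Pointwise

namespace Subgroup

variable {G : Type*} [Group G]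

def zpowersConjClosure (t a : G) : Subgroup G :=
  closure {x | ∃ n : ℤ, x = t ^ (-n) * a * t ^ n}

theorem zpowers_le_normalizer_zpowersConjClosure (t a : G) :
    zpowers t ≤ normalizer (zpowersConjClosure t a : Set G) := by
  rw [zpowersConjClosure, le_normalizer_closure_iff]
  rintro _ ⟨m, rfl⟩ _ ⟨n, rfl⟩
  exact subset_closure ⟨n - m, by group⟩

theorem zpowersConjClosure_le {N : Subgroup G} {t a : G} (ht : t ∈ normalizer (N : Set G))
    (ha : a ∈ N) : zpowersConjClosure t a ≤ N := by
  rw [zpowersConjClosure, closure_le]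
  rintro _ ⟨n, rfl⟩
  simpa using (mem_normalizer_iff.mp (zpow_mem ht (-n)) a).mp ha

theorem fg_of_isCyclic (K : Subgroup G) [IsCyclic K] : K.FG := by
  obtain ⟨g, rfl⟩ := K.isCyclic_iff_exists_zpowers_eq_top.mp ‹_›
  exact ⟨{g}, by simp [zpowers_eq_closure]⟩

theorem fg_of_fg_sup_zpowers {N : Subgroup G} {t : G} (ht : zpowers t ≤ normalizer (N : Set G))
    (hfg : (N ⊔ zpowers t).FG) (hconj : ∀ a ∈ N, (zpowersConjClosure t a).FG) : N.FG := by
  obtain ⟨S, hS⟩ := hfg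
  have hsplit : ∀ s ∈ S, ∃ a ∈ N, ∃ n : ℤ, a * t ^ n = s := by
    intro s hs
    have : s ∈ ((N ⊔ zpowers t : Subgroup G) : Set G) := hS ▸ subset_closure hs
    rw [coe_mul_of_right_le_normalizer_left N _ ht] at this
    obtain ⟨a, ha, _, ⟨n, rfl⟩, rfl⟩ := this
    exact ⟨a, ha, n, rfl⟩
  choose! a ha k hk using hsplit
  set M := ⨆ s ∈ S, zpowersConjClosure t (a s) with hM
  have hMN : M ≤ N := iSup₂_le fun s hs => zpowersConjClosure_le (ht (mem_zpowers t)) (ha s hs)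
  have htM : zpowers t ≤ normalizer (M : Set G) := by
    intro g hg
    simp only [hM, mem_normalizer_iff_map_conj_eq, map_iSup,
      mem_normalizer_iff_map_conj_eq.mp (zpowers_le_normalizer_zpowersConjClosure t _ hg)]
  have hNM : N ≤ M ⊔ zpowers t := by
    refine le_sup_left.trans (hS ▸ (closure_le _).mpr fun s hs => ?_)
    rw [← hk s hs]
    refine mul_mem (mem_sup_left ?_) (mem_sup_right ⟨k s, rfl⟩)
    exact le_biSup (fun s => zpowersConjClosure t (a s)) hs (subset_closure ⟨0, by simp⟩)
  -- Dedekind's modular law, available since `M ⊔ ⟨t⟩ = M ⟨t⟩` as sets.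
  have hmodular : N ≤ M ⊔ (zpowers t ⊓ N) := by
    have h := mul_inf_assoc M (zpowers t) N hMN
    rw [← coe_mul_of_right_le_normalizer_left M _ htM,
      Set.inter_eq_right.mpr (SetLike.coe_subset_coe.mpr hNM)] at h
    rw [← SetLike.coe_subset_coe, ← h]
    exact mul_subset (fun _ => mem_sup_left) fun _ => mem_sup_right
  have hMfg : M.FG := FG.biSup_finset S _ fun s hs => hconj _ (ha s hs)
  have : IsCyclic ↥(zpowers t ⊓ N) := isCyclic_of_le inf_le_left
  exact le_antisymm hmodular (sup_le hMN inf_le_right) ▸ hMfg.sup (fg_of_isCyclic _)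

theorem fg_of_commutator_le {K N : Subgroup G} (hNK : N ≤ K) (hKN : ⁅K, K⁆ ≤ N) (hK : K.FG)
    (hconj : ∀ a ∈ K, ∀ t ∈ K, (zpowersConjClosure t a).FG) : N.FG := by
  classical
  obtain ⟨S, rfl⟩ := hK
  suffices h : ∀ T : Finset G, (T : Set G) ⊆ closure (S : Set G) →
      (closure (T : Set G) ⊔ N).FG → N.FG from
    h S subset_closure (by rw [sup_eq_left.mpr hNK]; exact ⟨S, rfl⟩)
  intro T
  induction T using Finset.induction_on with
  | empty => simp
  | insert t T _ ih =>
    intro hT hfg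
    rw [Finset.coe_insert, Set.insert_subset_iff] at hT
    have hTN : closure (T : Set G) ⊔ N ≤ closure S := sup_le (closure_le _ |>.mpr hT.2) hNK
    refine ih hT.2 (fg_of_fg_sup_zpowers ?_ ?_ fun a ha => hconj a (hTN ha) t hT.1)
    · rw [le_normalizer_iff_commutator_le_right]
      exact (commutator_mono (zpowers_le.mpr hT.1) hTN).trans (hKN.trans le_sup_right)
    · rw [Finset.coe_insert, Set.insert_eq, closure_union, ← zpowers_eq_closure] at hfg
      rwa [sup_right_comm, sup_comm (closure _)]

theorem commutator_comap_le {G' : Type*} [Group G'] (f : G →* G') (A B : Subgroup G') :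
    ⁅A.comap f, B.comap f⁆ ≤ ⁅A, B⁆.comap f := by
  rw [← map_le_iff_le_comap, map_commutator]
  exact commutator_mono (map_comap_le f A) (map_comap_le f B)

theorem fg_ker_of_isSolvable {Q : Type*} [Group Q] [Group.IsSolvable Q] (f : G →* Q)
    (hG : Group.FG G) (hconj : ∀ a t : G, (zpowersConjClosure t a).FG) : f.ker.FG := by
  obtain ⟨n, hn⟩ := Group.IsSolvable.solvable (G := Q)
  suffices h : ∀ i, ((derivedSeries Q i).comap f).FG by simpa [hn] using h n
  intro i
  induction i with
  | zero => simpa using hG.out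
  | succ i ih =>
    refine fg_of_commutator_le (comap_mono (derivedSeries_antitone Q i.le_succ)) ?_ ih
      fun a _ t _ => hconj a t
    rw [derivedSeries_succ]
    exact commutator_comap_le f _ _

end Subgroup

/-- If `G` is finitely generated, `H ⊴ G` with `G/H` solvable, and for all `a b : G` the
subgroup `⟨b⁻ⁿ a bⁿ : n ∈ ℤ⟩` is finitely generated, then `H` is finitely generated. -/
theorem fg_of_conjugates_fg_of_solvable_quotient {G : Type*} [Group G]
    (hfg : Group.FG G) (H : Subgroup G) [H.Normal] (hsolv : IsSolvable (G ⧸ H))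
    (hconj : ∀ a b : G, (Subgroup.closure {x : G | ∃ n : ℤ, x = b ^ (-n) * a * b ^ n}).FG) :
    H.FG := by
  have : Group.IsSolvable (G ⧸ H) := hsolv
  simpa using Subgroup.fg_ker_of_isSolvable (QuotientGroup.mk' H) hfg fun a t => hconj a t
end

section
/- If G is a finitely presented indicable group without a free subsemigroup of rank 2, then the kernel of any surjective homomorphism G → ℤ is finitely generated. -/
/-- `G` is finitely presented. -/
def IsFinitelyPresentedGroup (G : Type*) [Group G] : Prop :=
  ∃ (n : ℕ) (R : Finset (FreeGroup (Fin n))),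
    Nonempty (G ≃* FreeGroup (Fin n) ⧸
      Subgroup.normalClosure (R : Set (FreeGroup (Fin n))))

/-!
Choose `t` with `f t = 1` and a finite generating set `S` of `G`. Then `ker f` is generated by
the conjugates `tⁱ bₛ t⁻ⁱ` (`i ∈ ℤ`) of the finitely many elements `bₛ = s t^(-f s)`, so it is
enough to see that for any `a, b` finitely many of the conjugates `aⁱ b a⁻ⁱ` generate all of them.

The semigroup generated by `a` and `b a` is not free, so two distinct words in these letters are
equal in `G`. A word of length `n` is a product of conjugates `aⁱ b a⁻ⁱ` with `0 ≤ i < n`,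
followed by `aⁿ`. Hence a relation either puts a positive power of `a` into
`H = ⟨aⁱ b a⁻ⁱ | 0 ≤ i < T⟩`, or (when the two words have the same length and first differ in
their first letter) writes `b` in terms of the conjugates with `0 < i < T`. In both cases
conjugating by powers of `a` and descending induction show that every conjugate with `i < T`
lies in `H`. The same argument for `a⁻¹` covers the conjugates with large `i`.
-/

open Subgroup Set

section Words

variable {G : Type*} [Group G]

def wordProd (x y : G) (L : List Bool) : G :=
  (L.map fun c => cond c x y).prod

@[simp]
lemma wordProd_nil (x y : G) : wordProd x y [] = 1 := rfl

@[simp]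
lemma wordProd_cons (x y : G) (c : Bool) (L : List Bool) :
    wordProd x y (c :: L) = cond c x y * wordProd x y L :=
  List.prod_cons

lemma lift_mk_eq_wordProd (x y : G) (c : Bool) (M : List Bool) :
    FreeSemigroup.lift (fun c => cond c x y) ⟨c, M⟩ = wordProd x y (c :: M) := by
  simp [wordProd, FreeSemigroup.lift_mk_eq_foldl, List.prod_eq_foldl, List.foldl_map]

lemma exists_ne_wordProd_eq
    (hnofree : ∀ φ : FreeSemigroup Bool →ₙ* G, ¬ Function.Injective φ) (x y : G) :
    ∃ L₁ L₂ : List Bool, L₁ ≠ L₂ ∧ wordProd x y L₁ = wordProd x y L₂ := by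
  obtain ⟨⟨c₁, M₁⟩, ⟨c₂, M₂⟩, heq, hne⟩ :=
    Function.not_injective_iff.1 (hnofree (FreeSemigroup.lift fun c => cond c x y))
  refine ⟨c₁ :: M₁, c₂ :: M₂, ?_, ?_⟩
  · simpa [FreeSemigroup.ext_iff] using hne
  · rwa [lift_mk_eq_wordProd, lift_mk_eq_wordProd] at heq

end Words

section ConjSpan

variable {G : Type*} [Group G] (a b : G)

def conjSpan (S : Set ℤ) : Subgroup G :=
  closure ((fun i : ℤ => MulAut.conj (a ^ i) b) '' S)

variable {a b}

lemma conj_zpow_mem_conjSpan {S : Set ℤ} {i : ℤ} (hi : i ∈ S) :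
    MulAut.conj (a ^ i) b ∈ conjSpan a b S :=
  subset_closure (mem_image_of_mem _ hi)

lemma self_mem_conjSpan {S : Set ℤ} (h : 0 ∈ S) : b ∈ conjSpan a b S := by
  simpa using conj_zpow_mem_conjSpan (a := a) (b := b) h

lemma conjSpan_mono {S T : Set ℤ} (h : S ⊆ T) : conjSpan a b S ≤ conjSpan a b T :=
  closure_mono (image_mono h)

variable (a b)

lemma conjSpan_union (S T : Set ℤ) :
    conjSpan a b (S ∪ T) = conjSpan a b S ⊔ conjSpan a b T := by
  rw [conjSpan, image_union, Subgroup.closure_union]; rfl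

lemma map_conj_conjSpan (k : ℤ) (S : Set ℤ) :
    (conjSpan a b S).map (MulAut.conj (a ^ k)) = conjSpan a b ((k + ·) '' S) := by
  rw [conjSpan, conjSpan, MonoidHom.map_closure, image_image, image_image]
  congr! 2 with i
  simp [zpow_add]

lemma map_conj_conjSpan_univ : (conjSpan a b univ).map (MulAut.conj a) = conjSpan a b univ := by
  simpa only [zpow_one, image_univ_of_surjective (add_left_surjective (1 : ℤ))] using
    map_conj_conjSpan a b 1 univ

lemma conjSpan_inv (S : Set ℤ) : conjSpan a⁻¹ b S = conjSpan a b (Neg.neg '' S) := by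
  simp only [conjSpan, image_image, inv_zpow']

variable {a b}

lemma conj_mem_conjSpan_add {S : Set ℤ} {x : G} (k : ℤ) (hx : x ∈ conjSpan a b S) :
    MulAut.conj (a ^ k) x ∈ conjSpan a b ((k + ·) '' S) :=
  map_conj_conjSpan a b k S ▸ mem_map_of_mem _ hx

lemma conj_mem_conjSpan_Ioo {n : ℤ} {x : G} (hx : x ∈ conjSpan a b (Ico 0 n)) :
    MulAut.conj a x ∈ conjSpan a b (Ioo 0 (n + 1)) := by
  refine conjSpan_mono ?_ (zpow_one a ▸ conj_mem_conjSpan_add 1 hx)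
  rintro _ ⟨m, hm, rfl⟩
  exact ⟨by grind, by grind⟩

lemma conjSpan_Iio_le_of_forall_neg {T : ℤ}
    (h : ∀ i < 0, MulAut.conj (a ^ i) b ∈ conjSpan a b (Ioo i T)) :
    conjSpan a b (Iio T) ≤ conjSpan a b (Ico 0 T) := by
  suffices ∀ n ≤ 0, ∀ j, n ≤ j → j < T → MulAut.conj (a ^ j) b ∈ conjSpan a b (Ico 0 T) by
    rw [conjSpan, closure_le]
    rintro _ ⟨i, hiT, rfl⟩
    exact this (min i 0) (min_le_right _ _) i (min_le_left _ _) hiT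
  intro n hn
  induction n, hn using Int.leInductionDown with
  | base => exact fun j hj hjT => conj_zpow_mem_conjSpan ⟨hj, hjT⟩
  | pred n hn ih =>
    intro j hj hjT
    obtain hj | rfl := hj.lt_or_eq
    · exact ih j (by omega) hjT
    · refine (closure_le _).2 ?_ (h (n - 1) (by omega))
      rintro _ ⟨m, hm, rfl⟩
      exact ih m (by grind) hm.2

lemma conjSpan_Iio_le_of_zpow_mem {T d : ℤ} (hd : 0 < d) (hdT : d ≤ T)
    (ha : a ^ d ∈ conjSpan a b (Ico 0 T)) : conjSpan a b (Iio T) ≤ conjSpan a b (Ico 0 T) := by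
  refine conjSpan_Iio_le_of_forall_neg fun i hi => ?_
  have hsub : conjSpan a b (Ico 0 T) ≤ conjSpan a b (Ioo i T) :=
    conjSpan_mono fun m hm => ⟨by grind, hm.2⟩
  have key : MulAut.conj (a ^ i) b = (a ^ d)⁻¹ * MulAut.conj (a ^ (i + d)) b * a ^ d := by
    simp only [MulAut.conj_apply, zpow_add]; group
  rw [key]
  exact mul_mem (mul_mem (inv_mem (hsub ha)) (conj_zpow_mem_conjSpan ⟨by omega, by omega⟩))
    (hsub ha)

lemma conjSpan_Iio_le_of_mem {T : ℤ} (hb : b ∈ conjSpan a b (Ioo 0 T)) :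
    conjSpan a b (Iio T) ≤ conjSpan a b (Ico 0 T) := by
  refine conjSpan_Iio_le_of_forall_neg fun i hi => ?_
  refine conjSpan_mono ?_ (conj_mem_conjSpan_add i hb)
  rintro _ ⟨m, hm, rfl⟩
  exact ⟨by grind, by grind⟩

variable (a b)

lemma exists_wordProd_eq_mul_zpow (L : List Bool) :
    ∃ h ∈ conjSpan a b (Ico 0 L.length), wordProd a (b * a) L = h * a ^ (L.length : ℤ) := by
  induction L with
  | nil => exact ⟨1, one_mem _, by simp⟩
  | cons c L ih =>
    obtain ⟨h, hh, hL⟩ := ih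
    have hconj : MulAut.conj a h ∈ conjSpan a b (Ico 0 ((L.length : ℤ) + 1)) :=
      conjSpan_mono Ioo_subset_Ico_self (conj_mem_conjSpan_Ioo hh)
    refine ⟨cond c 1 b * MulAut.conj a h, mul_mem ?_ (by simpa using hconj), ?_⟩
    · cases c
      · exact self_mem_conjSpan ⟨le_rfl, by simp⟩
      · exact one_mem _
    · cases c <;> simp [hL, zpow_add] <;> group

lemma zpow_sub_mem_conjSpan_of_wordProd_eq {L₁ L₂ : List Bool}
    (heq : wordProd a (b * a) L₁ = wordProd a (b * a) L₂) (hlen : L₁.length ≤ L₂.length) :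
    a ^ ((L₂.length : ℤ) - L₁.length) ∈ conjSpan a b (Ico 0 L₂.length) := by
  obtain ⟨h₁, hh₁, e₁⟩ := exists_wordProd_eq_mul_zpow a b L₁
  obtain ⟨h₂, hh₂, e₂⟩ := exists_wordProd_eq_mul_zpow a b L₂
  have hmem₁ : h₁ ∈ conjSpan a b (Ico 0 L₂.length) :=
    conjSpan_mono (Ico_subset_Ico_right (by exact_mod_cast hlen)) hh₁
  have key : a ^ ((L₂.length : ℤ) - L₁.length) = h₂⁻¹ * h₁ := by
    have h₁_eq : h₁ = h₂ * a ^ (L₂.length : ℤ) * (a ^ (L₁.length : ℤ))⁻¹ := by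
      rw [eq_mul_inv_iff_mul_eq, ← e₁, heq, e₂]
    rw [h₁_eq]
    group
  exact key ▸ mul_mem (inv_mem hh₂) hmem₁

lemma mem_conjSpan_Ioo_of_wordProd_eq {M₁ M₂ : List Bool} (hlen : M₁.length = M₂.length)
    (heq : wordProd a (b * a) (true :: M₁) = wordProd a (b * a) (false :: M₂)) :
    b ∈ conjSpan a b (Ioo 0 (M₁.length + 1)) := by
  obtain ⟨h₁, hh₁, e₁⟩ := exists_wordProd_eq_mul_zpow a b M₁
  obtain ⟨h₂, hh₂, e₂⟩ := exists_wordProd_eq_mul_zpow a b M₂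
  have key : b = MulAut.conj a h₁ * (MulAut.conj a h₂)⁻¹ := by
    rw [wordProd_cons, wordProd_cons, e₁, e₂, ← hlen, cond_true, cond_false] at heq
    have hb : b = a * (h₁ * a ^ (M₁.length : ℤ)) * (a * (h₂ * a ^ (M₁.length : ℤ)))⁻¹ := by
      rw [heq]; group
    rw [hb]
    simp only [MulAut.conj_apply]
    group
  have := mul_mem (conj_mem_conjSpan_Ioo hh₁) (inv_mem (conj_mem_conjSpan_Ioo (hlen ▸ hh₂)))
  rwa [← key] at this

lemma exists_mem_conjSpan_Ioo_of_wordProd_eq {L₁ L₂ : List Bool} (hlen : L₁.length = L₂.length)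
    (hne : L₁ ≠ L₂) (heq : wordProd a (b * a) L₁ = wordProd a (b * a) L₂) :
    ∃ T > 0, b ∈ conjSpan a b (Ioo 0 T) := by
  induction L₁ generalizing L₂ with
  | nil => exact absurd (List.length_eq_zero_iff.1 hlen.symm).symm hne
  | cons c₁ M₁ ih =>
    obtain _ | ⟨c₂, M₂⟩ := L₂
    · simp at hlen
    have hlen' : M₁.length = M₂.length := by simpa using hlen
    by_cases hc : c₁ = c₂
    · subst hc
      exact ih hlen' (by simpa using hne) (by simpa using heq)
    · refine ⟨M₁.length + 1, by omega, ?_⟩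
      cases c₁ <;> cases c₂ <;> try contradiction
      · exact hlen' ▸ mem_conjSpan_Ioo_of_wordProd_eq a b hlen'.symm heq.symm
      · exact mem_conjSpan_Ioo_of_wordProd_eq a b hlen' heq

lemma exists_conjSpan_Iio_le_Ico {L₁ L₂ : List Bool} (hne : L₁ ≠ L₂)
    (heq : wordProd a (b * a) L₁ = wordProd a (b * a) L₂) :
    ∃ T > 0, conjSpan a b (Iio T) ≤ conjSpan a b (Ico 0 T) := by
  wlog hle : L₁.length ≤ L₂.length generalizing L₁ L₂
  · exact this hne.symm heq.symm (by omega)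
  obtain hlt | hlen := hle.lt_or_eq
  · exact ⟨L₂.length, by omega, conjSpan_Iio_le_of_zpow_mem (by omega) (by omega)
      (zpow_sub_mem_conjSpan_of_wordProd_eq a b heq hle)⟩
  · obtain ⟨T, hT, hb⟩ := exists_mem_conjSpan_Ioo_of_wordProd_eq a b hlen hne heq
    exact ⟨T, hT, conjSpan_Iio_le_of_mem hb⟩

lemma conjSpan_univ_fg
    (hnofree : ∀ φ : FreeSemigroup Bool →ₙ* G, ¬ Function.Injective φ) :
    (conjSpan a b univ).FG := by
  obtain ⟨L₁, L₂, hne, heq⟩ := exists_ne_wordProd_eq hnofree a (b * a)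
  obtain ⟨T, hT, hle⟩ := exists_conjSpan_Iio_le_Ico a b hne heq
  obtain ⟨L₁', L₂', hne', heq'⟩ := exists_ne_wordProd_eq hnofree a⁻¹ (b * a⁻¹)
  obtain ⟨T', hT', hle'⟩ := exists_conjSpan_Iio_le_Ico a⁻¹ b hne' heq'
  rw [conjSpan_inv, conjSpan_inv] at hle'
  have huniv : univ = Iio T ∪ Neg.neg '' Iio T' := by
    ext i; simp only [mem_univ, mem_union, mem_Iio, image_neg_Iio, mem_Ioi, true_iff]; omega
  have hspan : conjSpan a b univ = conjSpan a b (Ioo (-T') T) := by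
    refine le_antisymm ?_ (conjSpan_mono (subset_univ _))
    rw [huniv, conjSpan_union]
    refine sup_le (hle.trans (conjSpan_mono ?_)) (hle'.trans (conjSpan_mono ?_))
    · exact fun i hi => ⟨by grind, hi.2⟩
    · rintro _ ⟨i, hi, rfl⟩
      exact ⟨by grind, by grind⟩
  rw [hspan]
  exact (Subgroup.fg_iff _).2 ⟨_, rfl, (finite_Ioo _ _).image _⟩

end ConjSpan

section Kernel

variable {G : Type*} [Group G]

lemma conjSpan_le_ker {H : Type*} [CommGroup H] (f : G →* H) {a b : G} (hb : f b = 1)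
    (S : Set ℤ) : conjSpan a b S ≤ f.ker := by
  rw [conjSpan, closure_le]
  rintro _ ⟨i, -, rfl⟩
  simp only [SetLike.mem_coe, MonoidHom.mem_ker, MulAut.conj_apply, map_mul, map_inv, hb, mul_one,
    mul_inv_cancel]

lemma ker_le_of_mem_normalizer {S : Set G} (hS : closure S = ⊤)
    {f : G →* Multiplicative ℤ} {t : G} {M : Subgroup G}
    (htM : t ∈ normalizer M) (hSM : ∀ s ∈ S, s * t ^ (-(f s).toAdd) ∈ M) : f.ker ≤ M := by
  have hconj (k : ℤ) {m : G} (hm : m ∈ M) : t ^ k * m * (t ^ k)⁻¹ ∈ M :=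
    (mem_normalizer_iff.1 (zpow_mem htM k) m).1 hm
  suffices ∀ g, g * t ^ (-(f g).toAdd) ∈ M from fun g hg => by
    simpa [(MonoidHom.mem_ker).1 hg] using this g
  intro g
  have hg : g ∈ closure S := hS ▸ mem_top g
  induction hg using closure_induction with
  | mem s hs => exact hSM s hs
  | one => simp
  | mul g h _ _ hg hh =>
    have key : g * h * t ^ (-(f (g * h)).toAdd) = g * t ^ (-(f g).toAdd) *
        (t ^ (f g).toAdd * (h * t ^ (-(f h).toAdd)) * (t ^ (f g).toAdd)⁻¹) := by
      rw [map_mul, toAdd_mul]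
      group
    exact key ▸ mul_mem hg (hconj _ hh)
  | inv g _ hg =>
    have key : g⁻¹ * t ^ (-(f g⁻¹).toAdd) =
        t ^ (-(f g).toAdd) * (g * t ^ (-(f g).toAdd))⁻¹ * (t ^ (-(f g).toAdd))⁻¹ := by
      rw [map_inv, toAdd_inv]
      group
    exact key ▸ hconj _ (inv_mem hg)

lemma ker_eq_iSup_conjSpan {S : Set G} (hS : closure S = ⊤)
    {f : G →* Multiplicative ℤ} {t : G} (ht : f t = .ofAdd 1) :
    f.ker = ⨆ s ∈ S, conjSpan t (s * t ^ (-(f s).toAdd)) univ := by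
  refine le_antisymm (ker_le_of_mem_normalizer hS (t := t) ?_ fun s hs => ?_)
    (iSup₂_le fun s _ => conjSpan_le_ker f (by simp [ht, ← ofAdd_zsmul]) univ)
  · simp only [mem_normalizer_iff_map_conj_eq, Subgroup.map_iSup, map_conj_conjSpan_univ]
  · refine mem_iSup_of_mem s (mem_iSup_of_mem hs ?_)
    exact self_mem_conjSpan (mem_univ 0)

end Kernel

lemma IsFinitelyPresentedGroup.fg {G : Type*} [Group G] (hG : IsFinitelyPresentedGroup G) :
    Group.FG G := by
  obtain ⟨n, R, ⟨e⟩⟩ := hG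
  exact Group.fg_of_surjective (f := e.symm.toMonoidHom) e.symm.surjective

/-- If `G` is a finitely presented indicable group with no free subsemigroup of rank 2,
then the kernel of any surjective homomorphism `G → ℤ` is finitely generated. -/
theorem ker_fg_of_fp_indicable_no_free_subsemigroup {G : Type*} [Group G]
    (hG : IsFinitelyPresentedGroup G)
    (hnofree : ∀ φ : FreeSemigroup Bool →ₙ* G, ¬ Function.Injective φ)
    (f : G →* Multiplicative ℤ) (hf : Function.Surjective f) :
    f.ker.FG := by
  obtain ⟨S, hS, hSfin⟩ := Group.fg_iff.1 hG.fg
  obtain ⟨t, ht⟩ := hf (.ofAdd 1)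
  rw [ker_eq_iSup_conjSpan hS ht]
  exact .biSup hSfin _ fun s _ => conjSpan_univ_fg t _ hnofree
end

section
/- Let H = ℤ[1/2]² ⋊ ℤ where the generator of ℤ acts on ℤ[1/2]² by multiplying the first coordinate by 2 and the second coordinate by 1/2. Then H is isomorphic to the kernel of the homomorphism from BS(1,2) × BS(1,2) to ℤ sending the two stable letters t, u to 1 and 1 respectively; equivalently, H is a normal subgroup of BS(1,2) × BS(1,2) with infinite cyclic quotient. -/
noncomputable section

/-- The ring `ℤ[1/2]` of dyadic rationals. -/
abbrev DyadicInt : Type := Localization.Away (2 : ℤ)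

/-- `2` as a unit of `ℤ[1/2]`. -/
def twoUnit : DyadicIntˣ :=
  ⟨algebraMap ℤ DyadicInt 2, IsLocalization.Away.invSelf 2,
    IsLocalization.Away.mul_invSelf 2,
    by rw [mul_comm]; exact IsLocalization.Away.mul_invSelf 2⟩

/-- The automorphism `(x, y) ↦ (2x, y/2)` of `ℤ[1/2]²` (written multiplicatively). -/
def dyadicShift : Multiplicative (DyadicInt × DyadicInt) ≃* Multiplicative (DyadicInt × DyadicInt) :=
  AddEquiv.toMultiplicative
    ((Multiplicative.toAdd (AddAut.mulLeft twoUnit)).prodCongr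
      (Multiplicative.toAdd (AddAut.mulLeft twoUnit⁻¹)))

/-- The group `H = ℤ[1/2]² ⋊ ℤ`, a generator of `ℤ` acting by `(x,y) ↦ (2x, y/2)`. -/
abbrev DyadicSemidirect : Type :=
  Multiplicative (DyadicInt × DyadicInt)
    ⋊[zpowersHom (MulAut (Multiplicative (DyadicInt × DyadicInt))) dyadicShift] Multiplicative ℤ

open scoped commutatorElement

/-- The relators of `⟨a,b,t,u ∣ [a,b],[a,u],[t,b],[t,u], aᵗ = a², bᵘ = b²⟩`, the direct
square of `BS(1,2)`; generators `0 = a`, `1 = b`, `2 = t`, `3 = u`. -/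
def bsRels : Set (FreeGroup (Fin 4)) :=
  { ⁅FreeGroup.of (0 : Fin 4), FreeGroup.of (1 : Fin 4)⁆, ⁅FreeGroup.of (0 : Fin 4), FreeGroup.of (3 : Fin 4)⁆,
    ⁅FreeGroup.of (2 : Fin 4), FreeGroup.of (1 : Fin 4)⁆, ⁅FreeGroup.of (2 : Fin 4), FreeGroup.of (3 : Fin 4)⁆,
    (FreeGroup.of (2 : Fin 4))⁻¹ * FreeGroup.of (0 : Fin 4) * FreeGroup.of (2 : Fin 4) *
      (FreeGroup.of (0 : Fin 4) * FreeGroup.of (0 : Fin 4))⁻¹,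
    (FreeGroup.of (3 : Fin 4))⁻¹ * FreeGroup.of (1 : Fin 4) * FreeGroup.of (3 : Fin 4) *
      (FreeGroup.of (1 : Fin 4) * FreeGroup.of (1 : Fin 4))⁻¹ }

namespace DyadicProof

/-! ### Generic `a^(n/2^k)` machinery in an arbitrary group -/

variable {G : Type*} [Group G]

/-- `dyE a t n k` represents `a^(n/2^k)`. -/
def dyE (a t : G) (n : ℤ) (k : ℕ) : G := t ^ k * a ^ n * (t ^ k)⁻¹

variable {a t : G}

lemma conj_zpow (h : t⁻¹ * a * t = a ^ 2) (n : ℤ) : t⁻¹ * a ^ n * t = a ^ (2 * n) := by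
  have : (MulAut.conj t⁻¹) a = a ^ 2 := by
    simpa [MulAut.conj_apply, mul_assoc] using h
  calc t⁻¹ * a ^ n * t = (MulAut.conj t⁻¹) (a ^ n) := by
        simp [MulAut.conj_apply, mul_assoc]
    _ = ((MulAut.conj t⁻¹) a) ^ n := by rw [map_zpow]
    _ = a ^ (2 * n) := by rw [this, ← zpow_natCast, ← zpow_mul]; norm_num [mul_comm]

lemma conj_zpow' (h : t⁻¹ * a * t = a ^ 2) (n : ℤ) : t * a ^ (2 * n) * t⁻¹ = a ^ n := by
  rw [← conj_zpow h n]; group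

lemma dyE_succ (h : t⁻¹ * a * t = a ^ 2) (n : ℤ) (k : ℕ) :
    dyE a t (2 * n) (k + 1) = dyE a t n k := by
  have := conj_zpow' h n
  simp only [dyE, pow_succ]
  calc t ^ k * t * a ^ (2*n) * (t ^ k * t)⁻¹
      = t ^ k * (t * a ^ (2*n) * t⁻¹) * (t ^ k)⁻¹ := by group
    _ = t ^ k * a ^ n * (t ^ k)⁻¹ := by rw [this]

lemma dyE_level (h : t⁻¹ * a * t = a ^ 2) (n : ℤ) (k j : ℕ) :
    dyE a t n k = dyE a t (n * 2 ^ j) (k + j) := by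
  induction j with
  | zero => simp
  | succ j ih =>
      rw [ih]
      have := dyE_succ h (n * 2 ^ j) (k + j)
      rw [← this]
      congr 1
      ring

lemma dyE_mul (n m : ℤ) (k : ℕ) : dyE a t n k * dyE a t m k = dyE a t (n + m) k := by
  simp only [dyE, zpow_add]; group

lemma dyE_key (h : t⁻¹ * a * t = a ^ 2) {n m : ℤ} {k j : ℕ}
    (hnm : n * 2 ^ j = m * 2 ^ k) : dyE a t n k = dyE a t m j := by
  rw [dyE_level h n k j, dyE_level h m j k, hnm, add_comm]

lemma dyE_comm (h : t⁻¹ * a * t = a ^ 2) (n m : ℤ) (k j : ℕ) :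
    dyE a t n k * dyE a t m j = dyE a t m j * dyE a t n k := by
  rw [dyE_level h n k j, dyE_level h m j k, add_comm j k, dyE_mul, dyE_mul, add_comm]

lemma dyE_up (n : ℤ) (k : ℕ) : t * dyE a t n k * t⁻¹ = dyE a t n (k + 1) := by
  simp only [dyE, pow_succ]; group

lemma dyE_zero (k : ℕ) : dyE a t 0 k = 1 := by simp [dyE]

lemma commute_dyE {b u : G} (hab : Commute a b) (hau : Commute a u)
    (htb : Commute t b) (htu : Commute t u) (n m : ℤ) (k j : ℕ) :
    Commute (dyE a t n k) (dyE b u m j) := by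
  have key : ∀ x : G, Commute x b → Commute x u → Commute x (dyE b u m j) := by
    intro x hxb hxu
    have := ((hxu.pow_right j).mul_right (hxb.zpow_right m)).mul_right
      (hxu.pow_right j).inv_right
    simpa [dyE, mul_assoc] using this
  have h1 : Commute (t ^ k) (dyE b u m j) := (key t htb htu).pow_left k
  have h2 : Commute (a ^ n) (dyE b u m j) := (key a hab hau).zpow_left n
  exact (h1.mul_left h2).mul_left h1.inv_left

lemma map_dyE {H : Type*} [Group H] (f : G →* H) (n : ℤ) (k : ℕ) :
    f (dyE a t n k) = dyE (f a) (f t) n k := by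
  simp [dyE, map_mul, map_zpow, map_pow, map_inv]

/-! ### The homomorphism `ℤ[1/2] → G` -/

/-- `2^k` as an element of the submonoid `powers 2`. -/
def pow2 (k : ℕ) : Submonoid.powers (2 : ℤ) := ⟨2 ^ k, k, rfl⟩

lemma pow2_zero : pow2 0 = 1 := by ext; simp [pow2]

lemma pow2_mul (k j : ℕ) : pow2 k * pow2 j = pow2 (k + j) := by
  ext; simp [pow2, pow_add]

lemma pow2_pow (k j : ℕ) : pow2 k ^ j = pow2 (k * j) := by
  ext; simp [pow2, ← pow_mul]

/-- The exponent of an element of `powers 2`. -/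
def expOf (s : Submonoid.powers (2 : ℤ)) : ℕ := s.2.choose

lemma expOf_spec (s : Submonoid.powers (2 : ℤ)) : (2 : ℤ) ^ expOf s = (s : ℤ) :=
  s.2.choose_spec

lemma two_pow_right_injective : Function.Injective (fun k : ℕ => (2:ℤ) ^ k) :=
  Int.pow_right_injective (by norm_num)

lemma expOf_pow2 (k : ℕ) : expOf (pow2 k) = k := by
  apply two_pow_right_injective
  simpa [pow2] using expOf_spec (pow2 k)

variable (a t)

/-- The group morphism `ℤ[1/2] → G` sending `n/2^k` to `t^k a^n t^(-k)`. -/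
def dyF (h : t⁻¹ * a * t = a ^ 2) (x : DyadicInt) : G :=
  Localization.liftOn x (fun n s => dyE a t n (expOf s)) (by
    intro p q r s hr
    obtain ⟨c, hc⟩ := Localization.r_iff_exists.mp hr
    have hc0 : (c : ℤ) ≠ 0 := by
      obtain ⟨e, he⟩ := c.2
      rw [← he]; positivity
    have hpq : (s : ℤ) * p = (r : ℤ) * q := mul_left_cancel₀ hc0 hc
    apply dyE_key h
    rw [expOf_spec, expOf_spec, mul_comm p, mul_comm q]
    exact hpq)

variable {a t}

lemma dyF_mk (h : t⁻¹ * a * t = a ^ 2) (n : ℤ) (k : ℕ) :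
    dyF a t h (Localization.mk n (pow2 k)) = dyE a t n k := by
  rw [dyF, Localization.liftOn_mk, expOf_pow2]

lemma exists_rep (x : DyadicInt) : ∃ (n : ℤ) (k : ℕ), x = Localization.mk n (pow2 k) := by
  induction x using Localization.ind with
  | _ y =>
    obtain ⟨k, hk⟩ := y.2.2
    exact ⟨y.1, k, by congr 1; exact Subtype.ext hk.symm⟩

lemma dyF_add (h : t⁻¹ * a * t = a ^ 2) (x y : DyadicInt) :
    dyF a t h (x + y) = dyF a t h x * dyF a t h y := by
  obtain ⟨n, k, rfl⟩ := exists_rep x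
  obtain ⟨m, j, rfl⟩ := exists_rep y
  rw [Localization.add_mk, pow2_mul, dyF_mk h, dyF_mk h, dyF_mk h]
  have h1 : dyE a t ((pow2 k : ℤ) * m) (k + j) = dyE a t m j := by
    apply dyE_key h
    show (pow2 k : ℤ) * m * 2 ^ j = m * 2 ^ (k + j)
    simp [pow2, pow_add]; ring
  have h2 : dyE a t ((pow2 j : ℤ) * n) (k + j) = dyE a t n k := by
    apply dyE_key h
    show (pow2 j : ℤ) * n * 2 ^ k = n * 2 ^ (k + j)
    simp [pow2, pow_add]; ring
  rw [← dyE_mul, h1, h2, dyE_comm h]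

lemma dyF_zero (h : t⁻¹ * a * t = a ^ 2) : dyF a t h 0 = 1 := by
  have : (0 : DyadicInt) = Localization.mk 0 (pow2 0) := by
    rw [pow2_zero, Localization.mk_one_eq_algebraMap, map_zero]
  rw [this, dyF_mk h, dyE_zero]

lemma dyF_one (h : t⁻¹ * a * t = a ^ 2) : dyF a t h 1 = a := by
  have : (1 : DyadicInt) = Localization.mk 1 (pow2 0) := by
    rw [pow2_zero, Localization.mk_one_eq_algebraMap, map_one]
  rw [this, dyF_mk h]
  simp [dyE]

lemma dyF_commute (h : t⁻¹ * a * t = a ^ 2) {c : G} (hc1 : Commute a c) (hc2 : Commute t c)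
    (x : DyadicInt) : Commute (dyF a t h x) c := by
  obtain ⟨n, k, rfl⟩ := exists_rep x
  rw [dyF_mk h]
  exact ((hc2.pow_left k).mul_left (hc1.zpow_left n)).mul_left (hc2.pow_left k).inv_left

end DyadicProof

namespace DyadicProof

lemma val_twoUnit : (twoUnit : DyadicInt) = Localization.mk 2 1 := by
  rw [Localization.mk_one_eq_algebraMap]; rfl

lemma inv_twoUnit_eq : ((twoUnit⁻¹ : DyadicIntˣ) : DyadicInt) = Localization.mk 1 (pow2 1) := by
  apply Units.inv_eq_of_mul_eq_one_right
  rw [val_twoUnit, Localization.mk_mul, mul_one, one_mul]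
  have : (2 : ℤ) = ((pow2 1 : Submonoid.powers (2:ℤ)) : ℤ) := by simp [pow2]
  rw [show Localization.mk 2 (pow2 1) = Localization.mk ((pow2 1 : Submonoid.powers (2:ℤ)) : ℤ) (pow2 1) by rw [← this]]
  exact Localization.mk_self _

lemma val_inv_pow (k : ℕ) :
    ((twoUnit ^ (-(k : ℤ)) : DyadicIntˣ) : DyadicInt) = Localization.mk 1 (pow2 k) := by
  have h1 : (twoUnit ^ (-(k : ℤ)) : DyadicIntˣ) = (twoUnit⁻¹) ^ k := by
    rw [zpow_neg, ← inv_zpow, zpow_natCast]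
  rw [h1, Units.val_pow_eq_pow_val, inv_twoUnit_eq, Localization.mk_pow, one_pow, pow2_pow,
    one_mul]

lemma mk_pow2_eq (n : ℤ) (k : ℕ) :
    Localization.mk n (pow2 k) =
      ((twoUnit ^ (-(k : ℤ)) : DyadicIntˣ) : DyadicInt) * algebraMap ℤ DyadicInt n := by
  rw [val_inv_pow, ← Localization.mk_one_eq_algebraMap, Localization.mk_mul, one_mul, mul_one]

variable {G : Type*} [Group G] {a t : G}

lemma dyF_conj (h : t⁻¹ * a * t = a ^ 2) (x : DyadicInt) :
    t * dyF a t h x * t⁻¹ = dyF a t h (((twoUnit⁻¹ : DyadicIntˣ) : DyadicInt) * x) := by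
  obtain ⟨n, k, rfl⟩ := exists_rep x
  rw [dyF_mk h, dyE_up, inv_twoUnit_eq, Localization.mk_mul, one_mul, pow2_mul, dyF_mk h,
    add_comm]

lemma dyF_conj' (h : t⁻¹ * a * t = a ^ 2) (x : DyadicInt) :
    t⁻¹ * dyF a t h x * t = dyF a t h (((twoUnit : DyadicIntˣ) : DyadicInt) * x) := by
  have h2 := dyF_conj h (((twoUnit : DyadicIntˣ) : DyadicInt) * x)
  rw [← mul_assoc, ← Units.val_mul, inv_mul_cancel, Units.val_one, one_mul] at h2
  rw [← h2]; group

lemma dyF_conj_zpow (h : t⁻¹ * a * t = a ^ 2) (m : ℤ) (x : DyadicInt) :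
    t ^ m * dyF a t h x * (t ^ m)⁻¹ = dyF a t h (((twoUnit ^ (-m) : DyadicIntˣ) : DyadicInt) * x) := by
  induction m using Int.induction_on generalizing x with
  | zero => simp
  | succ i ih =>
      have hsplit : t ^ ((i : ℤ) + 1) = t ^ (i : ℤ) * t := by rw [zpow_add, zpow_one]
      rw [hsplit, mul_inv_rev]
      calc t ^ (i:ℤ) * t * dyF a t h x * (t⁻¹ * (t ^ (i:ℤ))⁻¹)
          = t ^ (i:ℤ) * (t * dyF a t h x * t⁻¹) * (t ^ (i:ℤ))⁻¹ := by group
        _ = t ^ (i:ℤ) * dyF a t h (((twoUnit⁻¹ : DyadicIntˣ) : DyadicInt) * x) * (t ^ (i:ℤ))⁻¹ := by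
            rw [dyF_conj h]
        _ = dyF a t h (((twoUnit ^ (-(i:ℤ)) : DyadicIntˣ) : DyadicInt) *
              (((twoUnit⁻¹ : DyadicIntˣ) : DyadicInt) * x)) := ih _
        _ = dyF a t h (((twoUnit ^ (-((i:ℤ)+1)) : DyadicIntˣ) : DyadicInt) * x) := by
            rw [← mul_assoc, ← Units.val_mul, ← zpow_sub_one]
            ring_nf
  | pred i ih =>
      have hsplit : t ^ (-(i : ℤ) - 1) = t ^ (-(i : ℤ)) * t⁻¹ := by
        rw [zpow_sub, zpow_one]
      rw [hsplit, mul_inv_rev, inv_inv]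
      calc t ^ (-(i:ℤ)) * t⁻¹ * dyF a t h x * (t * (t ^ (-(i:ℤ)))⁻¹)
          = t ^ (-(i:ℤ)) * (t⁻¹ * dyF a t h x * t) * (t ^ (-(i:ℤ)))⁻¹ := by group
        _ = t ^ (-(i:ℤ)) * dyF a t h (((twoUnit : DyadicIntˣ) : DyadicInt) * x) * (t ^ (-(i:ℤ)))⁻¹ := by
            rw [dyF_conj' h]
        _ = dyF a t h (((twoUnit ^ ((i:ℤ)) : DyadicIntˣ) : DyadicInt) *
              (((twoUnit : DyadicIntˣ) : DyadicInt) * x)) := by rw [ih]; ring_nf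
        _ = dyF a t h (((twoUnit ^ (-(-(i:ℤ) - 1)) : DyadicIntˣ) : DyadicInt) * x) := by
            rw [← mul_assoc, ← Units.val_mul, ← zpow_add_one]
            ring_nf

end DyadicProof
namespace DyadicProof

abbrev P : Type := PresentedGroup bsRels

def A : P := PresentedGroup.of (0 : Fin 4)
def B : P := PresentedGroup.of (1 : Fin 4)
def T : P := PresentedGroup.of (2 : Fin 4)
def U : P := PresentedGroup.of (3 : Fin 4)

lemma mk_rel {r : FreeGroup (Fin 4)} (hr : r ∈ bsRels) : PresentedGroup.mk bsRels r = 1 := by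
  have : r ∈ Subgroup.normalClosure bsRels := Subgroup.subset_normalClosure hr
  exact (QuotientGroup.eq_one_iff r).mpr this

lemma mem1 : ⁅FreeGroup.of (0 : Fin 4), FreeGroup.of (1 : Fin 4)⁆ ∈ bsRels := Set.mem_insert _ _
lemma mem2 : ⁅FreeGroup.of (0 : Fin 4), FreeGroup.of (3 : Fin 4)⁆ ∈ bsRels :=
  Set.mem_insert_of_mem _ (Set.mem_insert _ _)
lemma mem3 : ⁅FreeGroup.of (2 : Fin 4), FreeGroup.of (1 : Fin 4)⁆ ∈ bsRels :=
  Set.mem_insert_of_mem _ (Set.mem_insert_of_mem _ (Set.mem_insert _ _))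
lemma mem4 : ⁅FreeGroup.of (2 : Fin 4), FreeGroup.of (3 : Fin 4)⁆ ∈ bsRels :=
  Set.mem_insert_of_mem _ (Set.mem_insert_of_mem _ (Set.mem_insert_of_mem _ (Set.mem_insert _ _)))
lemma mem5 : (FreeGroup.of (2 : Fin 4))⁻¹ * FreeGroup.of (0 : Fin 4) * FreeGroup.of (2 : Fin 4) *
      (FreeGroup.of (0 : Fin 4) * FreeGroup.of (0 : Fin 4))⁻¹ ∈ bsRels :=
  Set.mem_insert_of_mem _ (Set.mem_insert_of_mem _ (Set.mem_insert_of_mem _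
    (Set.mem_insert_of_mem _ (Set.mem_insert _ _))))
lemma mem6 : (FreeGroup.of (3 : Fin 4))⁻¹ * FreeGroup.of (1 : Fin 4) * FreeGroup.of (3 : Fin 4) *
      (FreeGroup.of (1 : Fin 4) * FreeGroup.of (1 : Fin 4))⁻¹ ∈ bsRels :=
  Set.mem_insert_of_mem _ (Set.mem_insert_of_mem _ (Set.mem_insert_of_mem _
    (Set.mem_insert_of_mem _ (Set.mem_insert_of_mem _ rfl))))

lemma of_eq_mk (x : Fin 4) : PresentedGroup.mk bsRels (FreeGroup.of x) = PresentedGroup.of x := rfl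

lemma hAB : Commute A B := by
  have := mk_rel mem1
  rw [map_commutatorElement] at this
  exact commutatorElement_eq_one_iff_commute.mp this

lemma hAU : Commute A U := by
  have := mk_rel mem2
  rw [map_commutatorElement] at this
  exact commutatorElement_eq_one_iff_commute.mp this

lemma hTB : Commute T B := by
  have := mk_rel mem3
  rw [map_commutatorElement] at this
  exact commutatorElement_eq_one_iff_commute.mp this

lemma hTU : Commute T U := by
  have := mk_rel mem4
  rw [map_commutatorElement] at this
  exact commutatorElement_eq_one_iff_commute.mp this

lemma hA : T⁻¹ * A * T = A ^ 2 := by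
  have := mk_rel mem5
  simp only [map_mul, map_inv] at this
  rw [mul_inv_eq_one] at this
  rw [sq]; exact this

lemma hB : U⁻¹ * B * U = B ^ 2 := by
  have := mk_rel mem6
  simp only [map_mul, map_inv] at this
  rw [mul_inv_eq_one] at this
  rw [sq]; exact this

end DyadicProof

namespace DyadicProof

abbrev N : Type := Multiplicative (DyadicInt × DyadicInt)
abbrev Q : Type := Multiplicative (ℤ × ℤ)

/-- The automorphism of `ℤ[1/2]²` multiplying coordinates by `2^m` and `2^n`. -/
def shiftAut (m n : ℤ) : MulAut N :=
  AddEquiv.toMultiplicative ((Multiplicative.toAdd (AddAut.mulLeft (twoUnit ^ m))).prodCongr (Multiplicative.toAdd (AddAut.mulLeft (twoUnit ^ n))))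

lemma shiftAut_apply (m n : ℤ) (p : N) :
    shiftAut m n p = Multiplicative.ofAdd
      (((twoUnit ^ m : DyadicIntˣ) : DyadicInt) * p.toAdd.1,
       ((twoUnit ^ n : DyadicIntˣ) : DyadicInt) * p.toAdd.2) := rfl

lemma shiftAut_mul (m n m' n' : ℤ) (p : N) :
    shiftAut m n (shiftAut m' n' p) = shiftAut (m + m') (n + n') p := by
  simp only [shiftAut_apply, toAdd_ofAdd, zpow_add, Units.val_mul, mul_assoc]

/-- The action of `ℤ²` on `ℤ[1/2]²`: `(m,n)` multiplies by `(2^{-m}, 2^{-n})`. -/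
def ψK : Q →* MulAut N :=
  MonoidHom.mk' (fun q => shiftAut (-q.toAdd.1) (-q.toAdd.2)) (by
    intro q r
    apply MulEquiv.ext; intro p
    show shiftAut _ _ p = shiftAut _ _ (shiftAut _ _ p)
    rw [shiftAut_mul]
    congr 1 <;> simp [neg_add] <;> ring)

abbrev Kp : Type := N ⋊[ψK] Q

lemma ψK_apply (m n : ℤ) (p : N) :
    ψK (Multiplicative.ofAdd (m, n)) p = Multiplicative.ofAdd
      (((twoUnit ^ (-m) : DyadicIntˣ) : DyadicInt) * p.toAdd.1,
       ((twoUnit ^ (-n) : DyadicIntˣ) : DyadicInt) * p.toAdd.2) := rfl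

end DyadicProof

namespace DyadicProof

open SemidirectProduct

def na : N := Multiplicative.ofAdd ((1 : DyadicInt), (0 : DyadicInt))
def nb : N := Multiplicative.ofAdd ((0 : DyadicInt), (1 : DyadicInt))
def qt : Q := Multiplicative.ofAdd ((1 : ℤ), (0 : ℤ))
def qu : Q := Multiplicative.ofAdd ((0 : ℤ), (1 : ℤ))

lemma ψK_qu_na : ψK qu na = na := by
  show ψK (Multiplicative.ofAdd ((0:ℤ), (1:ℤ))) na = na
  rw [ψK_apply]
  simp [na]

lemma ψK_qt_nb : ψK qt nb = nb := by
  show ψK (Multiplicative.ofAdd ((1:ℤ), (0:ℤ))) nb = nb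
  rw [ψK_apply]
  simp [nb]

lemma ψK_qt_inv_na : ψK qt⁻¹ na = na * na := by
  show ψK (Multiplicative.ofAdd ((-1:ℤ), (0:ℤ))) na = na * na
  rw [ψK_apply]
  show Multiplicative.ofAdd _ = Multiplicative.ofAdd (((1:DyadicInt),(0:DyadicInt)) + ((1:DyadicInt),(0:DyadicInt)))
  congr 1
  simp [na, Prod.ext_iff, neg_zero, zpow_one]
  rw [show ((twoUnit : DyadicIntˣ) : DyadicInt) = algebraMap ℤ DyadicInt 2 from rfl]
  rw [show algebraMap ℤ DyadicInt 2 = (2 : DyadicInt) by simp]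
  ring

lemma ψK_qu_inv_nb : ψK qu⁻¹ nb = nb * nb := by
  show ψK (Multiplicative.ofAdd ((0:ℤ), (-1:ℤ))) nb = nb * nb
  rw [ψK_apply]
  show Multiplicative.ofAdd _ = Multiplicative.ofAdd (((0:DyadicInt),(1:DyadicInt)) + ((0:DyadicInt),(1:DyadicInt)))
  congr 1
  simp [nb, Prod.ext_iff, neg_zero, zpow_one]
  rw [show ((twoUnit : DyadicIntˣ) : DyadicInt) = algebraMap ℤ DyadicInt 2 from rfl]
  rw [show algebraMap ℤ DyadicInt 2 = (2 : DyadicInt) by simp]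
  ring

lemma commute_inl_inr {n : N} {q : Q} (h : ψK q n = n) : Commute (inl n : Kp) (inr q) := by
  have h2 : (inr q : Kp) * inl n = inl (ψK q n) * inr q := by
    rw [inl_aut, mul_assoc, ← map_mul, inv_mul_cancel, map_one, mul_one]
  show (inl n : Kp) * inr q = inr q * inl n
  rw [h2, h]

def gens : Fin 4 → Kp
  | 0 => inl na
  | 1 => inl nb
  | 2 => inr qt
  | 3 => inr qu

lemma gens0 : gens 0 = inl na := rfl
lemma gens1 : gens 1 = inl nb := rfl
lemma gens2 : gens 2 = inr qt := rfl
lemma gens3 : gens 3 = inr qu := rfl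

lemma rels_check : ∀ r ∈ bsRels, FreeGroup.lift gens r = 1 := by
  intro r hr
  simp only [bsRels, Set.mem_insert_iff, Set.mem_singleton_iff] at hr
  rcases hr with rfl | rfl | rfl | rfl | rfl | rfl
  · rw [map_commutatorElement]
    simp only [FreeGroup.lift_apply_of, gens0, gens1]
    exact commutatorElement_eq_one_iff_commute.mpr ((Commute.all na nb).map inl)
  · rw [map_commutatorElement]
    simp only [FreeGroup.lift_apply_of, gens0, gens3]
    exact commutatorElement_eq_one_iff_commute.mpr (commute_inl_inr ψK_qu_na)
  · rw [map_commutatorElement]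
    simp only [FreeGroup.lift_apply_of, gens2, gens1]
    exact commutatorElement_eq_one_iff_commute.mpr (commute_inl_inr ψK_qt_nb).symm
  · rw [map_commutatorElement]
    simp only [FreeGroup.lift_apply_of, gens2, gens3]
    exact commutatorElement_eq_one_iff_commute.mpr ((Commute.all qt qu).map inr)
  · simp only [map_mul, map_inv, FreeGroup.lift_apply_of, gens0, gens2]
    rw [mul_inv_eq_one, ← map_inv]
    have := inl_aut_inv (φ := ψK) qt na
    rw [← map_inv, ψK_qt_inv_na] at this
    rw [← this, map_mul]
  · simp only [map_mul, map_inv, FreeGroup.lift_apply_of, gens1, gens3]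
    rw [mul_inv_eq_one, ← map_inv]
    have := inl_aut_inv (φ := ψK) qu nb
    rw [← map_inv, ψK_qu_inv_nb] at this
    rw [← this, map_mul]

/-- The homomorphism from the presented group to the concrete semidirect product. -/
def Φ : P →* Kp := PresentedGroup.toGroup rels_check

lemma Φ_A : Φ A = inl na := PresentedGroup.toGroup.of rels_check
lemma Φ_B : Φ B = inl nb := PresentedGroup.toGroup.of rels_check
lemma Φ_T : Φ T = inr qt := PresentedGroup.toGroup.of rels_check
lemma Φ_U : Φ U = inr qu := PresentedGroup.toGroup.of rels_check

end DyadicProof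

namespace DyadicProof

open SemidirectProduct

/-- Abbreviation for the image of `ℤ[1/2]` along `a`-conjugates. -/
def Fa : DyadicInt → P := dyF A T hA
def Fb : DyadicInt → P := dyF B U hB

lemma Fa_comm_B (x : DyadicInt) : Commute (Fa x) B := dyF_commute hA hAB hTB x
lemma Fa_comm_U (x : DyadicInt) : Commute (Fa x) U := dyF_commute hA hAU hTU x
lemma Fb_comm_A (y : DyadicInt) : Commute (Fb y) A := dyF_commute hB hAB.symm hAU.symm y
lemma Fb_comm_T (y : DyadicInt) : Commute (Fb y) T := dyF_commute hB hTB.symm hTU.symm y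

lemma Fa_comm_Fb (x y : DyadicInt) : Commute (Fa x) (Fb y) :=
  (dyF_commute hB (Fa_comm_B x).symm (Fa_comm_U x).symm y).symm

/-- `f₁ : ℤ[1/2]² → P`. -/
def f₁ : N →* P :=
  MonoidHom.mk' (fun p => Fa p.toAdd.1 * Fb p.toAdd.2) (by
    intro p q
    show Fa (p.toAdd.1 + q.toAdd.1) * Fb (p.toAdd.2 + q.toAdd.2) = _
    show _ = Fa p.toAdd.1 * Fb p.toAdd.2 * (Fa q.toAdd.1 * Fb q.toAdd.2)
    rw [Fa, Fb, dyF_add hA, dyF_add hB]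
    exact Commute.mul_mul_mul_comm (Fa_comm_Fb _ _) _ _)

lemma f₁_apply (x y : DyadicInt) :
    f₁ (Multiplicative.ofAdd (x, y)) = Fa x * Fb y := rfl

/-- `f₂ : ℤ² → P`. -/
def f₂ : Q →* P :=
  MonoidHom.mk' (fun q => T ^ q.toAdd.1 * U ^ q.toAdd.2) (by
    intro p q
    show T ^ (p.toAdd.1 + q.toAdd.1) * U ^ (p.toAdd.2 + q.toAdd.2) = _
    rw [zpow_add, zpow_add]
    exact Commute.mul_mul_mul_comm (hTU.zpow_zpow _ _) _ _)

lemma f₂_apply (m n : ℤ) :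
    f₂ (Multiplicative.ofAdd (m, n)) = T ^ m * U ^ n := rfl

variable {G' : Type*} [Group G']

lemma conj_mul_conj {w x y z : G'} (h1 : Commute y x) (h2 : Commute w z) (h3 : Commute w y) :
    (w * y) * (x * z) * (w * y)⁻¹ = (w * x * w⁻¹) * (y * z * y⁻¹) := by
  have hw : Commute w (y * z * y⁻¹) := (h3.mul_right h2).mul_right h3.inv_right
  rw [mul_inv_rev]
  calc w * y * (x * z) * (y⁻¹ * w⁻¹)
      = w * (y * x) * (z * y⁻¹) * w⁻¹ := by group
    _ = w * (x * y) * (z * y⁻¹) * w⁻¹ := by rw [h1.eq]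
    _ = w * x * (y * z * y⁻¹) * w⁻¹ := by group
    _ = w * x * (w⁻¹ * (y * z * y⁻¹)) := by
        rw [mul_assoc (w * x), ← hw.inv_left.eq]
    _ = w * x * w⁻¹ * (y * z * y⁻¹) := by simp [mul_assoc]

lemma compat :
    ∀ g : Q, f₁.comp (ψK g).toMonoidHom = (MulAut.conj (f₂ g)).toMonoidHom.comp f₁ := by
  intro g
  apply MonoidHom.ext
  intro p
  obtain ⟨m, n⟩ := g
  obtain ⟨x, y⟩ := p
  show f₁ (ψK (Multiplicative.ofAdd (m, n)) (Multiplicative.ofAdd (x, y))) =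
    (f₂ (Multiplicative.ofAdd (m, n))) * f₁ (Multiplicative.ofAdd (x, y)) *
      (f₂ (Multiplicative.ofAdd (m, n)))⁻¹
  rw [ψK_apply, f₂_apply, f₁_apply]
  simp only [toAdd_ofAdd]
  have e1 := dyF_conj_zpow hA m x
  have e2 := dyF_conj_zpow hB n y
  rw [show dyF A T hA = Fa from rfl] at e1
  rw [show dyF B U hB = Fb from rfl] at e2
  rw [← e1, ← e2]
  exact (conj_mul_conj ((Fa_comm_U x).symm.zpow_left n) ((Fb_comm_T y).symm.zpow_left m)
    (hTU.zpow_zpow m n)).symm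

/-- The homomorphism from the concrete semidirect product back to the presented group. -/
def Ψ : Kp →* P := SemidirectProduct.lift f₁ f₂ compat

end DyadicProof

namespace DyadicProof

open SemidirectProduct

lemma Fa_one : Fa 1 = A := dyF_one hA
lemma Fb_one : Fb 1 = B := dyF_one hB
lemma Fa_zero : Fa 0 = 1 := dyF_zero hA
lemma Fb_zero : Fb 0 = 1 := dyF_zero hB

lemma ΨΦ : Ψ.comp Φ = MonoidHom.id P := by
  apply PresentedGroup.ext
  intro i
  fin_cases i
  · show Ψ (Φ A) = A
    rw [Φ_A, Ψ, SemidirectProduct.lift_inl]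
    show Fa 1 * Fb 0 = A
    rw [Fa_one, Fb_zero, mul_one]
  · show Ψ (Φ B) = B
    rw [Φ_B, Ψ, SemidirectProduct.lift_inl]
    show Fa 0 * Fb 1 = B
    rw [Fb_one, Fa_zero, one_mul]
  · show Ψ (Φ T) = T
    rw [Φ_T, Ψ, SemidirectProduct.lift_inr]
    show T ^ (1:ℤ) * U ^ (0:ℤ) = T
    rw [zpow_one, zpow_zero, mul_one]
  · show Ψ (Φ U) = U
    rw [Φ_U, Ψ, SemidirectProduct.lift_inr]
    show T ^ (0:ℤ) * U ^ (1:ℤ) = U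
    rw [zpow_one, zpow_zero, one_mul]

lemma qt_pow (k : ℕ) : qt ^ k = Multiplicative.ofAdd ((k : ℤ), (0 : ℤ)) := by
  rw [qt, ← ofAdd_nsmul]
  congr 1
  simp

lemma qu_pow (k : ℕ) : qu ^ k = Multiplicative.ofAdd ((0 : ℤ), (k : ℤ)) := by
  rw [qu, ← ofAdd_nsmul]
  congr 1
  simp

lemma na_zpow (n : ℤ) : na ^ n = Multiplicative.ofAdd ((algebraMap ℤ DyadicInt n : DyadicInt), (0 : DyadicInt)) := by
  rw [na, ← ofAdd_zsmul]
  congr 1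
  ext
  · simp [zsmul_eq_mul]
  · simp

lemma nb_zpow (n : ℤ) : nb ^ n = Multiplicative.ofAdd ((0 : DyadicInt), (algebraMap ℤ DyadicInt n : DyadicInt)) := by
  rw [nb, ← ofAdd_zsmul]
  congr 1
  ext
  · simp
  · simp [zsmul_eq_mul]

lemma Φ_Fa (x : DyadicInt) : Φ (Fa x) = inl (Multiplicative.ofAdd (x, (0 : DyadicInt))) := by
  obtain ⟨n, k, rfl⟩ := exists_rep x
  rw [Fa, dyF_mk hA, map_dyE, Φ_A, Φ_T]
  rw [dyE, ← map_pow, ← map_zpow, ← map_inv, ← inl_aut]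
  congr 1
  rw [qt_pow, na_zpow, ψK_apply]
  congr 1
  ext
  · show ((twoUnit ^ (-(k:ℤ)) : DyadicIntˣ) : DyadicInt) * (algebraMap ℤ DyadicInt n) = _
    rw [← mk_pow2_eq]
  · show ((twoUnit ^ (-(0:ℤ)) : DyadicIntˣ) : DyadicInt) * 0 = 0
    simp

lemma Φ_Fb (y : DyadicInt) : Φ (Fb y) = inl (Multiplicative.ofAdd ((0 : DyadicInt), y)) := by
  obtain ⟨n, k, rfl⟩ := exists_rep y
  rw [Fb, dyF_mk hB, map_dyE, Φ_B, Φ_U]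
  rw [dyE, ← map_pow, ← map_zpow, ← map_inv, ← inl_aut]
  congr 1
  rw [qu_pow, nb_zpow, ψK_apply]
  congr 1
  ext
  · show ((twoUnit ^ (-(0:ℤ)) : DyadicIntˣ) : DyadicInt) * 0 = 0
    simp
  · show ((twoUnit ^ (-(k:ℤ)) : DyadicIntˣ) : DyadicInt) * (algebraMap ℤ DyadicInt n) = _
    rw [← mk_pow2_eq]

lemma ΦΨ : Φ.comp Ψ = MonoidHom.id Kp := by
  apply SemidirectProduct.hom_ext
  · apply MonoidHom.ext
    intro p
    obtain ⟨x, y⟩ := p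
    show Φ (Ψ (inl (Multiplicative.ofAdd (x, y)))) = inl (Multiplicative.ofAdd (x, y))
    rw [Ψ, SemidirectProduct.lift_inl, f₁_apply, map_mul, Φ_Fa, Φ_Fb, ← map_mul]
    congr 1
    rw [← ofAdd_add]
    congr 1
    simp
  · apply MonoidHom.ext
    intro q
    obtain ⟨m, n⟩ := q
    show Φ (Ψ (inr (Multiplicative.ofAdd (m, n)))) = inr (Multiplicative.ofAdd (m, n))
    rw [Ψ, SemidirectProduct.lift_inr, f₂_apply, map_mul, map_zpow, map_zpow, Φ_T, Φ_U,
      ← map_zpow, ← map_zpow, ← map_mul]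
    congr 1
    rw [qt, qu, ← ofAdd_zsmul, ← ofAdd_zsmul, ← ofAdd_add]
    congr 1
    simp

/-- The isomorphism between the presented group and the concrete semidirect product. -/
def eIso : P ≃* Kp := MonoidHom.toMulEquiv Φ Ψ ΨΦ ΦΨ

end DyadicProof

namespace DyadicProof

open SemidirectProduct

/-- The "sum of the `ℤ²`-part" homomorphism from `Kp`. -/
def sHom : Kp →* Multiplicative ℤ :=
  (MonoidHom.mk' (fun q : Q => Multiplicative.ofAdd (q.toAdd.1 + q.toAdd.2)) (by
    intro p q
    have h : ((p * q).toAdd.1 + (p * q).toAdd.2) =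
        (p.toAdd.1 + p.toAdd.2) + (q.toAdd.1 + q.toAdd.2) := by
      show (p.toAdd.1 + q.toAdd.1) + (p.toAdd.2 + q.toAdd.2) = _
      ring
    exact congrArg Multiplicative.ofAdd h)).comp rightHom

lemma sHom_apply (z : Kp) :
    sHom z = Multiplicative.ofAdd (z.right.toAdd.1 + z.right.toAdd.2) := rfl

/-- The hom `Multiplicative ℤ →* MulAut N` given by `r ↦ shiftAut r (-r)`. -/
def shiftDiag : Multiplicative ℤ →* MulAut N :=
  MonoidHom.mk' (fun r => shiftAut r.toAdd (-(r.toAdd))) (by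
    intro r r'
    apply MulEquiv.ext; intro p
    show shiftAut (r.toAdd + r'.toAdd) (-(r.toAdd + r'.toAdd)) p = shiftAut _ _ (shiftAut _ _ p)
    rw [shiftAut_mul, neg_add])

lemma dyadicShift_eq_shiftAut : dyadicShift = shiftAut 1 (-1) := by
  apply MulEquiv.ext; intro p
  obtain ⟨x, y⟩ := p
  show (Multiplicative.ofAdd (((twoUnit : DyadicIntˣ) : DyadicInt) * x, ((twoUnit⁻¹ : DyadicIntˣ) : DyadicInt) * y) : N) = shiftAut 1 (-1) (Multiplicative.ofAdd (x, y))
  rw [shiftAut_apply]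
  have h1 : ((twoUnit : DyadicIntˣ) : DyadicInt) = ((twoUnit ^ (1:ℤ) : DyadicIntˣ) : DyadicInt) := by
    rw [zpow_one]
  have h2 : ((twoUnit⁻¹ : DyadicIntˣ) : DyadicInt) = ((twoUnit ^ (-1:ℤ) : DyadicIntˣ) : DyadicInt) := by
    rw [zpow_neg_one]
  rw [h1, h2]
  rfl

lemma dyadicShift_zpow (r : ℤ) : dyadicShift ^ r = shiftAut r (-r) := by
  have h : zpowersHom (MulAut N) dyadicShift = shiftDiag := by
    apply MonoidHom.ext_mint
    rw [zpowersHom_apply, toAdd_ofAdd, zpow_one]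
    show dyadicShift = shiftAut _ _
    rw [dyadicShift_eq_shiftAut]
    rfl
  have h2 := DFunLike.congr_fun h (Multiplicative.ofAdd r)
  rw [zpowersHom_apply, toAdd_ofAdd] at h2
  exact h2

lemma ψK_diag (r : ℤ) :
    ψK (Multiplicative.ofAdd (-r, r)) = dyadicShift ^ r := by
  rw [dyadicShift_zpow]
  show shiftAut (-(-r)) (-r) = shiftAut r (-r)
  rw [neg_neg]

/-- The isomorphism from `DyadicSemidirect` onto the kernel of `sHom`. -/
def χ : DyadicSemidirect ≃* sHom.ker where
  toFun d := ⟨⟨d.left, Multiplicative.ofAdd (-(d.right.toAdd), d.right.toAdd)⟩, by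
    rw [MonoidHom.mem_ker, sHom_apply]
    simp⟩
  invFun k := ⟨(k : Kp).left, Multiplicative.ofAdd ((k : Kp).right.toAdd.2)⟩
  left_inv d := rfl
  right_inv k := by
    apply Subtype.ext
    have hk := k.2
    rw [MonoidHom.mem_ker, sHom_apply, ← ofAdd_zero] at hk
    have h2 : (k : Kp).right.toAdd.1 + (k : Kp).right.toAdd.2 = 0 :=
      Multiplicative.ofAdd.injective hk
    refine SemidirectProduct.ext rfl ?_
    show Multiplicative.ofAdd (-((k : Kp).right.toAdd.2), (k : Kp).right.toAdd.2) = (k : Kp).right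
    have h3 : (-((k : Kp).right.toAdd.2), (k : Kp).right.toAdd.2) = (k : Kp).right.toAdd := by
      ext
      · show -((k : Kp).right.toAdd.2) = (k : Kp).right.toAdd.1
        omega
      · rfl
    rw [h3]
    rfl
  map_mul' d d' := by
    apply Subtype.ext
    refine SemidirectProduct.ext ?_ ?_
    · show (d * d').left = d.left *
        ψK (Multiplicative.ofAdd (-(d.right.toAdd), d.right.toAdd)) d'.left
      rw [ψK_diag, SemidirectProduct.mul_left]
      rfl
    · show Multiplicative.ofAdd (-((d * d').right.toAdd), (d * d').right.toAdd) = _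
      show _ = Multiplicative.ofAdd (-(d.right.toAdd), d.right.toAdd) *
        Multiplicative.ofAdd (-(d'.right.toAdd), d'.right.toAdd)
      rw [← ofAdd_add]
      congr 1
      have : (d * d').right.toAdd = d.right.toAdd + d'.right.toAdd := rfl
      rw [this, Prod.mk_add_mk]
      congr 1
      ring

end DyadicProof


/-- `ℤ[1/2]² ⋊ ℤ` (with the action `(x,y) ↦ (2x, y/2)`) is isomorphic to the kernel of the
homomorphism `BS(1,2) × BS(1,2) → ℤ` sending `a, b ↦ 0` and the stable letters `t, u ↦ 1`;
in particular it is (isomorphic to) a normal subgroup of `BS(1,2) × BS(1,2)` with infinite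
cyclic quotient. -/
theorem dyadicSemidirect_iso_ker (f : PresentedGroup bsRels →* Multiplicative ℤ)
    (ha : f (PresentedGroup.of 0) = 1) (hb : f (PresentedGroup.of 1) = 1)
    (ht : f (PresentedGroup.of 2) = Multiplicative.ofAdd 1)
    (hu : f (PresentedGroup.of 3) = Multiplicative.ofAdd 1) :
    Nonempty (DyadicSemidirect ≃* f.ker) ∧
    f.ker.Normal ∧
    Function.Surjective f ∧
    Nonempty ((PresentedGroup bsRels ⧸ f.ker) ≃* Multiplicative ℤ) := by
  open DyadicProof in
  have hfs : f = sHom.comp Φ := by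
    apply PresentedGroup.ext
    intro i
    fin_cases i
    · show f (PresentedGroup.of (0 : Fin 4)) = sHom (Φ (PresentedGroup.of (0 : Fin 4)))
      rw [show PresentedGroup.of (0 : Fin 4) = A from rfl, Φ_A, show f A = _ from ha]; rfl
    · show f (PresentedGroup.of (1 : Fin 4)) = sHom (Φ (PresentedGroup.of (1 : Fin 4)))
      rw [show PresentedGroup.of (1 : Fin 4) = B from rfl, Φ_B, show f B = _ from hb]; rfl
    · show f (PresentedGroup.of (2 : Fin 4)) = sHom (Φ (PresentedGroup.of (2 : Fin 4)))
      rw [show PresentedGroup.of (2 : Fin 4) = T from rfl, Φ_T, show f T = _ from ht]; rfl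
    · show f (PresentedGroup.of (3 : Fin 4)) = sHom (Φ (PresentedGroup.of (3 : Fin 4)))
      rw [show PresentedGroup.of (3 : Fin 4) = U from rfl, Φ_U, show f U = _ from hu]; rfl
  have hsurj : Function.Surjective f := by
    intro z
    refine ⟨T ^ z.toAdd, ?_⟩
    rw [map_zpow, show f T = Multiplicative.ofAdd 1 from ht, ← ofAdd_zsmul, smul_eq_mul,
      mul_one, ofAdd_toAdd]
  have hΦΨ : ∀ z : Kp, Φ (Ψ z) = z := by
    intro z
    have h := DFunLike.congr_fun ΦΨ z
    simpa using h
  have hker_eq : Subgroup.map eIso.toMonoidHom f.ker = sHom.ker := by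
    ext z
    simp only [Subgroup.mem_map, MonoidHom.mem_ker]
    constructor
    · rintro ⟨g, hg, rfl⟩
      rw [hfs] at hg
      exact hg
    · intro hz
      refine ⟨Ψ z, ?_, ?_⟩
      · rw [hfs]
        show sHom (Φ (Ψ z)) = 1
        rw [hΦΨ z]
        exact hz
      · show Φ (Ψ z) = z
        exact hΦΨ z
  have equiv1 : DyadicSemidirect ≃* f.ker :=
    χ.trans ((MulEquiv.subgroupCongr hker_eq.symm).trans (eIso.subgroupMap f.ker).symm)
  exact ⟨⟨equiv1⟩, MonoidHom.normal_ker f, hsurj,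
    ⟨QuotientGroup.quotientKerEquivOfSurjective f hsurj⟩⟩
end
end

section
/- In the group G = ⟨a,b,t,u | [a,b],[a,u],[t,b],[t,u], a^t = a², b^u = b²⟩ (the direct square of BS(1,2)), the subgroup H = ⟨a, b, tu^{-1}⟩ is normal and G/H is infinite cyclic. -/
open scoped commutatorElement

/-!
The homomorphism `G → ℤ` sending `a, b ↦ 0` and `t, u ↦ 1` kills `H`. Conversely, `H` is
normal: since `t = (tu⁻¹) u` only conjugation by `u` needs checking, and it fixes `a` and
`tu⁻¹`, while `b ↦ u b u⁻¹ = (tu⁻¹)⁻¹ b (tu⁻¹)` and `b ↦ u⁻¹ b u = b²`. In `G ⧸ H` the images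
of `a, b` vanish and `t ≡ u`, so `n ↦ tⁿ H` factors the quotient map through `G → ℤ`, forcing
the kernel into `H`.
-/

namespace Subgroup

variable {G : Type*} [Group G]

theorem mem_normalizer_closure_of_conj_mem {S : Set G} {g : G}
    (h₁ : ∀ s ∈ S, g * s * g⁻¹ ∈ closure S) (h₂ : ∀ s ∈ S, g⁻¹ * s * g ∈ closure S) :
    g ∈ normalizer (closure S : Set G) := by
  have map_conj_le : ∀ x : G, (∀ s ∈ S, x * s * x⁻¹ ∈ closure S) →
      (closure S).map (MulAut.conj x).toMonoidHom ≤ closure S := by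
    intro x hx
    rw [MonoidHom.map_closure, closure_le]
    rintro _ ⟨s, hs, rfl⟩
    exact hx s hs
  rw [mem_normalizer_iff_map_conj_eq]
  refine le_antisymm (map_conj_le g h₁) ?_
  have conj_comp : (MulAut.conj g).toMonoidHom.comp (MulAut.conj g⁻¹).toMonoidHom =
      MonoidHom.id G := by
    ext; simp [mul_assoc]
  have :=
    map_mono (f := (MulAut.conj g).toMonoidHom) (map_conj_le g⁻¹ (by simpa using h₂))
  rwa [map_map, conj_comp, map_id] at this

end Subgroup

namespace PresentedGroup

variable {α : Type*} {rels : Set (FreeGroup α)}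

theorem commute_of_commutatorElement_mem {x y : α}
    (h : ⁅FreeGroup.of x, FreeGroup.of y⁆ ∈ rels) : Commute (of (rels := rels) x) (of y) := by
  have := one_of_mem h
  rw [map_commutatorElement] at this
  exact commutatorElement_eq_one_iff_commute.mp this

theorem normal_of_forall_of_mem_normalizer {H : Subgroup (PresentedGroup rels)}
    (h : ∀ x : α, of x ∈ Subgroup.normalizer (H : Set (PresentedGroup rels))) : H.Normal :=
  Subgroup.normalizer_eq_top_iff.mp (eq_top_iff.mpr fun g _ ↦ generated_by rels _ h g)

end PresentedGroup

namespace BSSquare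

abbrev G := PresentedGroup bsRels

noncomputable abbrev a : G := PresentedGroup.of 0
noncomputable abbrev b : G := PresentedGroup.of 1
noncomputable abbrev t : G := PresentedGroup.of 2
noncomputable abbrev u : G := PresentedGroup.of 3

noncomputable abbrev H : Subgroup G := Subgroup.closure {a, b, t * u⁻¹}

theorem commute_a_u : Commute a u :=
  PresentedGroup.commute_of_commutatorElement_mem (by simp [bsRels])

theorem commute_t_b : Commute t b :=
  PresentedGroup.commute_of_commutatorElement_mem (by simp [bsRels])

theorem commute_t_u : Commute t u :=
  PresentedGroup.commute_of_commutatorElement_mem (by simp [bsRels])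

theorem u_inv_mul_b_mul_u : u⁻¹ * b * u = b * b := by
  refine PresentedGroup.mk_eq_mk_of_mul_inv_mem (rels := bsRels) ?_
  simp [bsRels]

theorem a_mem_H : a ∈ H := Subgroup.subset_closure (by simp)
theorem b_mem_H : b ∈ H := Subgroup.subset_closure (by simp)
theorem t_mul_u_inv_mem_H : t * u⁻¹ ∈ H := Subgroup.subset_closure (by simp)

theorem u_mem_normalizer : u ∈ Subgroup.normalizer (H : Set G) := by
  have commute_u_z : Commute u (t * u⁻¹) :=
    commute_t_u.symm.mul_right (Commute.refl u).inv_right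
  have u_conj_b : u * b * u⁻¹ = (t * u⁻¹)⁻¹ * b * (t * u⁻¹) := by
    rw [mul_inv_rev, inv_inv, mul_assoc u t⁻¹ b, commute_t_b.inv_left.eq]
    group
  refine Subgroup.mem_normalizer_closure_of_conj_mem ?_ ?_ <;> rintro s (rfl | rfl | rfl)
  · rw [commute_a_u.symm.mul_inv_cancel]; exact a_mem_H
  · rw [u_conj_b]; exact mul_mem (mul_mem (inv_mem t_mul_u_inv_mem_H) b_mem_H) t_mul_u_inv_mem_H
  · rw [commute_u_z.mul_inv_cancel]; exact t_mul_u_inv_mem_H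
  · rw [commute_a_u.symm.inv_left.eq, inv_mul_cancel_right]; exact a_mem_H
  · rw [u_inv_mul_b_mul_u]; exact mul_mem b_mem_H b_mem_H
  · rw [commute_u_z.inv_left.eq, inv_mul_cancel_right]; exact t_mul_u_inv_mem_H

instance H_normal : H.Normal := by
  refine PresentedGroup.normal_of_forall_of_mem_normalizer fun x ↦ ?_
  have mem_normalizer : H ≤ Subgroup.normalizer (H : Set G) := Subgroup.le_normalizer
  fin_cases x
  · exact mem_normalizer a_mem_H
  · exact mem_normalizer b_mem_H
  · simpa using mul_mem (mem_normalizer t_mul_u_inv_mem_H) u_mem_normalizer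
  · exact u_mem_normalizer

noncomputable def tuExponentSum : G →* Multiplicative ℤ :=
  PresentedGroup.toGroup (f := ![1, 1, Multiplicative.ofAdd 1, Multiplicative.ofAdd 1])
    fun r hr ↦ by
      simp only [bsRels, Set.mem_insert_iff, Set.mem_singleton_iff] at hr
      rcases hr with rfl | rfl | rfl | rfl | rfl | rfl <;> simp [map_commutatorElement, mul_comm]

@[simp] theorem tuExponentSum_a : tuExponentSum a = 1 := by simp [tuExponentSum]
@[simp] theorem tuExponentSum_b : tuExponentSum b = 1 := by simp [tuExponentSum]
@[simp] theorem tuExponentSum_t : tuExponentSum t = Multiplicative.ofAdd 1 := by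
  simp [tuExponentSum]
@[simp] theorem tuExponentSum_u : tuExponentSum u = Multiplicative.ofAdd 1 := by
  simp [tuExponentSum]

theorem tuExponentSum_surjective : Function.Surjective tuExponentSum :=
  fun n ↦ ⟨t ^ n.toAdd, by simp [← ofAdd_zsmul]⟩

theorem zpowersHom_comp_tuExponentSum :
    (zpowersHom (G ⧸ H) t).comp tuExponentSum = QuotientGroup.mk' H := by
  refine PresentedGroup.ext fun x ↦ ?_
  fin_cases x
  · exact ((QuotientGroup.eq_one_iff a).mpr a_mem_H).symm
  · exact ((QuotientGroup.eq_one_iff b).mpr b_mem_H).symm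
  · simp
  · simpa [QuotientGroup.eq_iff_div_mem, div_eq_mul_inv] using t_mul_u_inv_mem_H

theorem ker_tuExponentSum : tuExponentSum.ker = H := by
  refine le_antisymm (fun g hg ↦ ?_) ?_
  · rw [← QuotientGroup.eq_one_iff, ← QuotientGroup.mk'_apply, ← zpowersHom_comp_tuExponentSum,
      MonoidHom.comp_apply, MonoidHom.mem_ker.mp hg, map_one]
  · rw [Subgroup.closure_le]
    rintro _ (rfl | rfl | rfl) <;> simp

end BSSquare

/-- In `G = ⟨a,b,t,u ∣ [a,b],[a,u],[t,b],[t,u], aᵗ = a², bᵘ = b²⟩` (the direct square of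
`BS(1,2)`), the subgroup `H = ⟨a, b, tu⁻¹⟩` is normal with infinite cyclic quotient
(expressed by `H` being the kernel of a surjection onto `ℤ`). -/
theorem bs_square_subgroup_normal_infinite_cyclic_quotient :
    (Subgroup.closure {PresentedGroup.of (rels := bsRels) 0, PresentedGroup.of 1,
        PresentedGroup.of 2 * (PresentedGroup.of 3)⁻¹}).Normal ∧
    ∃ f : PresentedGroup bsRels →* Multiplicative ℤ, Function.Surjective f ∧
      f.ker = Subgroup.closure {PresentedGroup.of (rels := bsRels) 0, PresentedGroup.of 1,
        PresentedGroup.of 2 * (PresentedGroup.of 3)⁻¹} := by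
  open BSSquare in
  exact ⟨H_normal, tuExponentSum, tuExponentSum_surjective, ker_tuExponentSum⟩
end

section
/- The kernel of the homomorphism F₂ × F₂ → ℤ sending each of the four standard generators to 1 is finitely generated but not finitely presented. -/
/-- The homomorphism `F₂ × F₂ → ℤ` sending each of the four standard generators to `1`. -/
def stallingsMap : FreeGroup Bool × FreeGroup Bool →* Multiplicative ℤ :=
  ((FreeGroup.lift fun _ : Bool => Multiplicative.ofAdd (1 : ℤ)).comp
      (MonoidHom.fst (FreeGroup Bool) (FreeGroup Bool))) *
    ((FreeGroup.lift fun _ : Bool => Multiplicative.ofAdd (1 : ℤ)).comp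
      (MonoidHom.snd (FreeGroup Bool) (FreeGroup Bool)))

section Presentations

variable {G : Type*} [Group G]

theorem IsFinitelyPresentedGroup.isFinitelyPresented (h : IsFinitelyPresentedGroup G) :
    Group.IsFinitelyPresented G := by
  obtain ⟨n, R, ⟨e⟩⟩ := h
  exact Group.IsFinitelyPresented.equiv (G := PresentedGroup (R : Set (FreeGroup (Fin n)))) e.symm

/-- Transport the finitely many relators of a presentation `ψ` along a lift `f` of `ψ` through
`φ`, and add the relators `i⁻¹ f (g i)` for a lift `g` of `φ` through `ψ`. -/
theorem Group.IsFinitelyPresented.isFinitelyNormallyGenerated_ker [Group.IsFinitelyPresented G]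
    {α : Type*} [Finite α] (φ : FreeGroup α →* G) (hφ : Function.Surjective φ) :
    φ.ker.IsFinitelyNormallyGenerated := by
  obtain ⟨n, ψ, hψ, S, hS, hSψ⟩ := ‹Group.IsFinitelyPresented G›
  let f : FreeGroup (Fin n) →* FreeGroup α :=
    FreeGroup.lift fun i => Function.surjInv hφ (ψ (.of i))
  let g : FreeGroup α →* FreeGroup (Fin n) :=
    FreeGroup.lift fun i => Function.surjInv hψ (φ (.of i))
  have hφf : φ.comp f = ψ := FreeGroup.ext_hom _ _ fun i => by
    simp [f, Function.surjInv_eq hφ]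
  have hψg : ψ.comp g = φ := FreeGroup.ext_hom _ _ fun i => by
    simp [g, Function.surjInv_eq hψ]
  let R := f '' S ∪ Set.range fun i => (FreeGroup.of i)⁻¹ * f (g (.of i))
  set C := Subgroup.normalClosure R
  refine ⟨R, (hS.image f).union (Set.finite_range _), le_antisymm ?_ fun w hw => ?_⟩
  · have hφfg (w : FreeGroup α) : φ (f (g w)) = φ w := by
      rw [← MonoidHom.comp_apply φ f, hφf, ← MonoidHom.comp_apply, hψg]
    refine Subgroup.normalClosure_le_normal (Set.union_subset ?_ ?_)
    · rintro _ ⟨s, hs, rfl⟩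
      have : ψ s = 1 := by rw [← MonoidHom.mem_ker, ← hSψ]; exact Subgroup.subset_normalClosure hs
      simpa [← hφf] using this
    · rintro _ ⟨i, rfl⟩
      simp [hφfg]
  have hfg : (QuotientGroup.mk' C).comp (f.comp g) = QuotientGroup.mk' C :=
    FreeGroup.ext_hom _ _ fun i => (QuotientGroup.eq.2 <|
      Subgroup.subset_normalClosure (.inr ⟨i, rfl⟩)).symm
  have hgw : g w ∈ Subgroup.normalClosure S := by
    rw [hSψ, MonoidHom.mem_ker, ← MonoidHom.comp_apply, hψg]; exact hw
  have hfgw : f (g w) ∈ C := Subgroup.normalClosure_le_normal (N := C.comap f)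
    (fun s hs => Subgroup.subset_normalClosure (.inl ⟨s, hs, rfl⟩)) hgw
  rw [← QuotientGroup.eq_one_iff, ← QuotientGroup.mk'_apply, ← hfg]
  exact (QuotientGroup.eq_one_iff _).2 hfgw

theorem Subgroup.exists_finset_mem_normalClosure_image {ι : Type*} {r : ι → G} {z : G}
    (hz : z ∈ normalClosure (Set.range r)) : ∃ J : Finset ι, z ∈ normalClosure (r '' J) := by
  classical
  let M : Subgroup G :=
    { carrier := {z | ∃ J : Finset ι, z ∈ normalClosure (r '' J)}
      one_mem' := ⟨∅, one_mem _⟩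
      mul_mem' := fun ⟨J₁, h₁⟩ ⟨J₂, h₂⟩ => ⟨J₁ ∪ J₂, mul_mem
        (normalClosure_mono (by gcongr; simp) h₁) (normalClosure_mono (by gcongr; simp) h₂)⟩
      inv_mem' := fun ⟨J, h⟩ => ⟨J, inv_mem h⟩ }
  have : M.Normal := ⟨fun z ⟨J, h⟩ g => ⟨J, normalClosure_normal.conj_mem z h g⟩⟩
  exact normalClosure_le_normal (N := M)
    (by rintro _ ⟨i, rfl⟩; exact ⟨{i}, subset_normalClosure (by simp)⟩) hz

theorem Subgroup.not_isFinitelyNormallyGenerated_normalClosure_range {ι : Type*} {r : ι → G}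
    (h : ∀ J : Finset ι, ∃ N : Subgroup G, N.Normal ∧ r '' J ⊆ N ∧ ¬ Set.range r ⊆ N) :
    ¬ (normalClosure (Set.range r)).IsFinitelyNormallyGenerated := by
  classical
  rintro ⟨U, hU, hUr⟩
  choose! J hJ using fun u (hu : u ∈ U) =>
    exists_finset_mem_normalClosure_image (hUr ▸ subset_normalClosure hu)
  obtain ⟨N, hN, hJN, hrN⟩ := h (hU.toFinset.biUnion J)
  refine hrN (subset_normalClosure.trans (hUr ▸ normalClosure_le_normal fun u hu => ?_))
  refine normalClosure_le_normal (subset_trans ?_ hJN) (hJ u hu)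
  gcongr
  exact Finset.subset_biUnion_of_mem J (hU.mem_toFinset.2 hu)

end Presentations

section ConjugatesByPowers

variable {G H : Type*} [Group G] [Group H]

def FreeGroup.shiftAut : Multiplicative ℤ →* MulAut (FreeGroup ℤ) where
  toFun e := freeGroupCongr (Equiv.addRight e.toAdd)
  map_one' := MulEquiv.toMonoidHom_injective <| ext_hom _ _ fun n => by simp
  map_mul' e e' := MulEquiv.toMonoidHom_injective <| ext_hom _ _ fun n => by
    simp [add_assoc, add_comm e.toAdd]

@[simp]
theorem FreeGroup.shiftAut_of (e : Multiplicative ℤ) (n : ℤ) :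
    shiftAut e (of n) = of (n + e.toAdd) := by
  simp [shiftAut]

def conjPowers (s g : G) : FreeGroup ℤ →* G :=
  FreeGroup.lift fun n => s ^ n * g * s ^ (-n)

@[simp]
theorem conjPowers_of (s g : G) (n : ℤ) : conjPowers s g (.of n) = s ^ n * g * s ^ (-n) := by
  simp [conjPowers]

theorem comp_conjPowers (f : G →* H) (s g : G) :
    f.comp (conjPowers s g) = conjPowers (f s) (f g) :=
  FreeGroup.ext_hom _ _ fun n => by simp

theorem conjPowers_shiftAut (s g : G) (e : Multiplicative ℤ) (u : FreeGroup ℤ) :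
    conjPowers s g (FreeGroup.shiftAut e u) = s ^ e.toAdd * conjPowers s g u * (s ^ e.toAdd)⁻¹ := by
  suffices (conjPowers s g).comp (FreeGroup.shiftAut e).toMonoidHom =
      (MulAut.conj (s ^ e.toAdd)).toMonoidHom.comp (conjPowers s g) from
    DFunLike.congr_fun this u
  refine FreeGroup.ext_hom _ _ fun n => ?_
  simp only [MonoidHom.comp_apply, MulEquiv.coe_toMonoidHom, FreeGroup.shiftAut_of,
    conjPowers_of, MulAut.conj_apply]
  group

theorem FreeGroup.commute_of_commute_of {α β : Type*} {f : FreeGroup α →* G}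
    {g : FreeGroup β →* G} (h : ∀ i j, Commute (f (of i)) (g (of j))) (u : FreeGroup α)
    (v : FreeGroup β) : Commute (f u) (g v) := by
  induction u with
  | C1 => simp
  | of i =>
    induction v with
    | C1 => simp
    | of j => exact h i j
    | inv_of j hj => simpa using hj.inv_right
    | mul v w hv hw => simpa using hv.mul_right hw
  | inv_of i hi => simpa using hi.inv_left
  | mul u w hu hw => simpa using hu.mul_left hw

theorem conjPowers_one (s : G) : conjPowers s (1 : G) = 1 :=
  FreeGroup.ext_hom _ _ fun n => by simp

theorem conjPowers_prod (s g : G × H) (u : FreeGroup ℤ) :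
    conjPowers s g u = (conjPowers s.1 g.1 u, conjPowers s.2 g.2 u) :=
  Prod.ext (DFunLike.congr_fun (comp_conjPowers (.fst G H) s g) u)
    (DFunLike.congr_fun (comp_conjPowers (.snd G H) s g) u)

end ConjugatesByPowers

namespace Stallings

open SemidirectProduct (inl inr rightHom)
open scoped commutatorElement

def a : FreeGroup Bool := .of true
def b : FreeGroup Bool := .of false
def c : FreeGroup Bool := b * a⁻¹

def exponentSum : FreeGroup Bool →* Multiplicative ℤ := FreeGroup.lift fun _ => .ofAdd 1

abbrev W := FreeGroup ℤ ⋊[FreeGroup.shiftAut] Multiplicative ℤ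

def toF₂ : W →* FreeGroup Bool :=
  SemidirectProduct.lift (conjPowers a c) (zpowersHom _ a)
    fun e => MonoidHom.ext (conjPowers_shiftAut a c e)

def ofF₂ : FreeGroup Bool →* W :=
  FreeGroup.lift fun i => cond i (inr (.ofAdd 1)) (inl (.of 0) * inr (.ofAdd 1))

theorem inr_ofAdd_one_zpow (n : ℤ) : (inr (.ofAdd 1) : W) ^ n = inr (.ofAdd n) := by
  rw [← map_zpow, ← ofAdd_zsmul, smul_eq_mul, mul_one]

@[simp]
theorem toF₂_ofF₂ (p : FreeGroup Bool) : toF₂ (ofF₂ p) = p := by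
  suffices toF₂.comp ofF₂ = .id _ from DFunLike.congr_fun this p
  exact FreeGroup.ext_hom _ _ fun i => by cases i <;> simp [toF₂, ofF₂, a, b, c]

@[simp]
theorem toF₂_inl (u : FreeGroup ℤ) : toF₂ (inl u) = conjPowers a c u :=
  SemidirectProduct.lift_inl _ _ _ u

theorem ofF₂_a : ofF₂ a = inr (.ofAdd 1) := by simp [ofF₂, a]

theorem ofF₂_c : ofF₂ c = inl (.of 0) := by
  rw [c, map_mul, map_inv, ofF₂_a]
  simp [ofF₂, b]

@[simp]
theorem ofF₂_conjPowers (u : FreeGroup ℤ) : ofF₂ (conjPowers a c u) = inl u := by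
  suffices ofF₂.comp (conjPowers a c) = inl from DFunLike.congr_fun this u
  refine (comp_conjPowers _ _ _).trans (FreeGroup.ext_hom _ _ fun n => ?_)
  rw [conjPowers_of, ofF₂_a, ofF₂_c, inr_ofAdd_one_zpow, inr_ofAdd_one_zpow, ofAdd_neg,
    ← SemidirectProduct.inl_aut, FreeGroup.shiftAut_of, toAdd_ofAdd, zero_add]

theorem rightHom_ofF₂ (p : FreeGroup Bool) : rightHom (ofF₂ p) = exponentSum p := by
  suffices rightHom.comp ofF₂ = exponentSum from DFunLike.congr_fun this p
  exact FreeGroup.ext_hom _ _ fun i => by cases i <;> simp [ofF₂, exponentSum]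

theorem conjPowers_a_c_injective : Function.Injective (conjPowers a c) :=
  fun u v h => SemidirectProduct.inl_injective (φ := FreeGroup.shiftAut) <| by
    simpa using congrArg ofF₂ h

theorem range_conjPowers_a_c : (conjPowers a c).range = exponentSum.ker := by
  apply le_antisymm
  · rintro _ ⟨u, rfl⟩
    rw [MonoidHom.mem_ker, ← rightHom_ofF₂, ofF₂_conjPowers, SemidirectProduct.rightHom_inl]
  · intro p hp
    obtain ⟨u, hu⟩ : ofF₂ p ∈ (inl : FreeGroup ℤ →* W).range := by
      rwa [SemidirectProduct.range_inl_eq_ker_rightHom, MonoidHom.mem_ker, rightHom_ofF₂]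
    exact ⟨u, by simpa using congrArg toF₂ hu⟩

theorem stallingsMap_apply (p q : FreeGroup Bool) :
    stallingsMap (p, q) = exponentSum p * exponentSum q := rfl

def x : FreeGroup (Fin 3) := .of 0
def y : FreeGroup (Fin 3) := .of 1
def t : FreeGroup (Fin 3) := .of 2

def toProd : FreeGroup (Fin 3) →* FreeGroup Bool × FreeGroup Bool :=
  FreeGroup.lift ![(c, 1), (1, c), (a, a⁻¹)]

@[simp] theorem toProd_x : toProd x = (c, 1) := by simp [toProd, x]
@[simp] theorem toProd_y : toProd y = (1, c) := by simp [toProd, y]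
@[simp] theorem toProd_t : toProd t = (a, a⁻¹) := by simp [toProd, t]

def rel (j : ℤ) : FreeGroup (Fin 3) := ⁅x, t ^ j * y * t ^ (-j)⁆

abbrev relClosure : Subgroup (FreeGroup (Fin 3)) := Subgroup.normalClosure (Set.range rel)

theorem toProd_rel (j : ℤ) : toProd (rel j) = 1 := by
  simp [rel, commutatorElement_def, Prod.ext_iff, mul_assoc]

def normalForm (u v : FreeGroup ℤ) (e : ℤ) : FreeGroup (Fin 3) :=
  conjPowers t x u * conjPowers t⁻¹ y v * t ^ e

theorem toProd_normalForm (u v : FreeGroup ℤ) (e : ℤ) :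
    toProd (normalForm u v e) = (conjPowers a c u * a ^ e, conjPowers a c v * a⁻¹ ^ e) := by
  simp [normalForm, ← MonoidHom.comp_apply toProd, comp_conjPowers, conjPowers_prod,
    conjPowers_one]

theorem exponentSum_a_zpow (e : ℤ) : exponentSum (a ^ e) = .ofAdd e := by
  simp [exponentSum, a, ← ofAdd_zsmul]

theorem range_toProd : toProd.range = stallingsMap.ker := by
  apply le_antisymm
  · rintro _ ⟨w, rfl⟩
    suffices stallingsMap.comp toProd = 1 from DFunLike.congr_fun this w
    refine FreeGroup.ext_hom _ _ fun i => ?_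
    fin_cases i <;> simp [toProd, stallingsMap_apply, exponentSum, c, a, b]
  · rintro ⟨p, q⟩ hpq
    set e := (exponentSum p).toAdd
    obtain ⟨u, hu⟩ : p * a ^ (-e) ∈ (conjPowers a c).range := by
      simp [range_conjPowers_a_c, exponentSum_a_zpow, e]
    obtain ⟨v, hv⟩ : q * a⁻¹ ^ (-e) ∈ (conjPowers a c).range := by
      rw [MonoidHom.mem_ker, stallingsMap_apply] at hpq
      simp [range_conjPowers_a_c, exponentSum_a_zpow, e, eq_inv_of_mul_eq_one_right hpq]
    exact ⟨normalForm u v e, by simp [toProd_normalForm, hu, hv]⟩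

theorem eq_one_of_toProd_normalForm_eq_one {u v : FreeGroup ℤ} {e : ℤ}
    (h : toProd (normalForm u v e) = 1) : normalForm u v e = 1 := by
  rw [toProd_normalForm, Prod.mk_eq_one] at h
  have he : e = 0 := by
    have hu : exponentSum (conjPowers a c u) = 1 := by
      rw [← MonoidHom.mem_ker, ← range_conjPowers_a_c]; exact ⟨u, rfl⟩
    simpa [hu, exponentSum_a_zpow] using congrArg exponentSum h.1
  subst he
  have hu : u = 1 := conjPowers_a_c_injective (by simpa using h.1)
  have hv : v = 1 := conjPowers_a_c_injective (by simpa using h.2)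
  simp [normalForm, hu, hv]

/-- The second factor will carry the conjugates of `y` by powers of `t⁻¹`, which `t` shifts
backwards. -/
def shiftAut₂ : Multiplicative ℤ →* MulAut (FreeGroup ℤ × FreeGroup ℤ) where
  toFun e := (FreeGroup.shiftAut e).prodCongr (FreeGroup.shiftAut e⁻¹)
  map_one' := by ext <;> simp [MulEquiv.prodCongr]
  map_mul' e e' := by
    ext p
    · simp [MulEquiv.prodCongr]
    · rw [mul_comm e e']
      simp [MulEquiv.prodCongr]

theorem shiftAut₂_apply (e : Multiplicative ℤ) (p : FreeGroup ℤ × FreeGroup ℤ) :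
    shiftAut₂ e p = (FreeGroup.shiftAut e p.1, FreeGroup.shiftAut e⁻¹ p.2) := rfl

theorem commute_mk_conjPowers (u v : FreeGroup ℤ) :
    Commute (QuotientGroup.mk' relClosure (conjPowers t x u))
      (QuotientGroup.mk' relClosure (conjPowers t⁻¹ y v)) := by
  refine FreeGroup.commute_of_commute_of (f := (QuotientGroup.mk' _).comp _)
    (g := (QuotientGroup.mk' _).comp _) (fun n m => ?_) u v
  have : ⁅t ^ n * x * t ^ (-n), t⁻¹ ^ m * y * t⁻¹ ^ (-m)⁆ = t ^ n * rel (-(n + m)) * t ^ (-n) := by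
    simp only [rel, commutatorElement_def, inv_zpow']
    group
  rw [← commutatorElement_eq_one_iff_commute, MonoidHom.comp_apply, MonoidHom.comp_apply,
    ← map_commutatorElement, conjPowers_of, conjPowers_of, this, QuotientGroup.mk'_apply,
    QuotientGroup.eq_one_iff, zpow_neg]
  exact Subgroup.normalClosure_normal.conj_mem _
    (Subgroup.subset_normalClosure (Set.mem_range_self _)) _

abbrev V := (FreeGroup ℤ × FreeGroup ℤ) ⋊[shiftAut₂] Multiplicative ℤ

def toQuotient : V →* FreeGroup (Fin 3) ⧸ relClosure :=
  SemidirectProduct.lift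
    (MonoidHom.noncommCoprod ((QuotientGroup.mk' _).comp (conjPowers t x))
      ((QuotientGroup.mk' _).comp (conjPowers t⁻¹ y)) commute_mk_conjPowers)
    ((QuotientGroup.mk' _).comp (zpowersHom _ t))
    fun e => MonoidHom.ext fun p => by
      simp only [MonoidHom.comp_apply, MulEquiv.coe_toMonoidHom, shiftAut₂_apply,
        MonoidHom.noncommCoprod_apply, conjPowers_shiftAut, MulAut.conj_apply, zpowersHom_apply,
        toAdd_inv, inv_zpow', neg_neg]
      simp only [map_mul, map_inv]
      group

theorem toQuotient_apply (z : V) : toQuotient z = normalForm z.left.1 z.left.2 z.right.toAdd := by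
  rw [← SemidirectProduct.inl_left_mul_inr_right z, map_mul]
  simp [toQuotient, normalForm]

def ofFreeGroup₃ : FreeGroup (Fin 3) →* V :=
  FreeGroup.lift ![inl (.of 0, 1), inl (1, .of 0), inr (.ofAdd 1)]

theorem toQuotient_ofFreeGroup₃ (w : FreeGroup (Fin 3)) :
    toQuotient (ofFreeGroup₃ w) = w := by
  suffices toQuotient.comp ofFreeGroup₃ = QuotientGroup.mk' _ from DFunLike.congr_fun this w
  refine FreeGroup.ext_hom _ _ fun i => ?_
  fin_cases i <;> simp [toQuotient_apply, ofFreeGroup₃, normalForm, x, y, t]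

theorem exists_normalForm (w : FreeGroup (Fin 3)) :
    ∃ u v e, (w : FreeGroup (Fin 3) ⧸ relClosure) = normalForm u v e :=
  ⟨_, _, _, by rw [← toQuotient_ofFreeGroup₃, toQuotient_apply]⟩

theorem relClosure_le_ker_toProd : relClosure ≤ toProd.ker :=
  Subgroup.normalClosure_le_normal <| Set.range_subset_iff.2 toProd_rel

theorem ker_toProd : toProd.ker = relClosure := by
  refine le_antisymm (fun w hw => ?_) relClosure_le_ker_toProd
  obtain ⟨u, v, e, h⟩ := exists_normalForm w
  have : toProd (normalForm u v e) = 1 := by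
    rw [← QuotientGroup.lift_mk _ relClosure_le_ker_toProd, ← h, QuotientGroup.lift_mk]
    exact hw
  rw [← QuotientGroup.eq_one_iff, h, eq_one_of_toProd_normalForm_eq_one this, QuotientGroup.mk_one]

def permRep (m : ℤ) : FreeGroup (Fin 3) →* Equiv.Perm ℤ :=
  FreeGroup.lift ![Equiv.swap 0 1, Equiv.swap m (m + 1), Equiv.addRight 1]

theorem permRep_rel (m j : ℤ) :
    permRep m (rel j) = ⁅Equiv.swap (0 : ℤ) 1, Equiv.swap (m + j) (m + j + 1)⁆ := by
  have hconj : permRep m (t ^ j * y * t ^ (-j)) = Equiv.swap (m + j) (m + j + 1) := by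
    simp only [permRep, t, y, map_mul, map_zpow, FreeGroup.lift_apply_of]
    simp only [Matrix.cons_val, zpow_neg, ← Equiv.swap_apply_apply]
    simp [add_right_comm m 1 j]
  rw [rel, map_commutatorElement, hconj]
  simp [permRep, x]

theorem rel_mem_ker_permRep {m j : ℤ} (h : 2 ≤ m + j) : rel j ∈ (permRep m).ker := by
  rw [MonoidHom.mem_ker, permRep_rel, commutatorElement_eq_one_iff_commute]
  exact (Equiv.Perm.disjoint_swap_swap (by simp; omega)).commute

theorem rel_notMem_ker_permRep (m : ℤ) : rel (1 - m) ∉ (permRep m).ker := by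
  rw [MonoidHom.mem_ker, permRep_rel, add_sub_cancel, one_add_one_eq_two]
  intro h
  have := congrArg (· 0) h
  simp [commutatorElement_def, Equiv.swap_apply_of_ne_of_ne] at this

theorem not_isFinitelyNormallyGenerated_relClosure : ¬ relClosure.IsFinitelyNormallyGenerated := by
  refine Subgroup.not_isFinitelyNormallyGenerated_normalClosure_range fun J => ?_
  let m : ℤ := J.sup Int.natAbs + 2
  refine ⟨(permRep m).ker, inferInstance, ?_, fun h => rel_notMem_ker_permRep m (h ⟨_, rfl⟩)⟩
  rintro _ ⟨j, hj, rfl⟩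
  have hj' := Finset.le_sup (f := Int.natAbs) hj
  exact rel_mem_ker_permRep (by omega)

end Stallings

/-- **Stallings–Bieri.** The kernel of `F₂ × F₂ → ℤ` sending each of the four standard
generators to `1` is finitely generated but not finitely presented. -/
theorem stallings_kernel_fg_not_fp :
    stallingsMap.ker.FG ∧ ¬ IsFinitelyPresentedGroup stallingsMap.ker := by
  open Stallings in
  refine ⟨?_, fun hfp => ?_⟩
  · rw [← range_toProd, ← Group.fg_iff_subgroup_fg]
    infer_instance
  · have : Group.IsFinitelyPresented toProd.range :=
      .equiv (MulEquiv.subgroupCongr range_toProd.symm) (h := hfp.isFinitelyPresented)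
    have hker := Group.IsFinitelyPresented.isFinitelyNormallyGenerated_ker toProd.rangeRestrict
      toProd.rangeRestrict_surjective
    rw [MonoidHom.ker_rangeRestrict, ker_toProd] at hker
    exact not_isFinitelyNormallyGenerated_relClosure hker
end
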